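/- arXiv:1503.02792 — 2 statements merged into one kernel-verified Lean document; each statement's English description precedes it below -/
import Mathlib

section
/- Let k be a positive integer and let (1,…,k) ∈ S_k ⊂ P_k be the partition corresponding to the full cycle i ↦ i+1 mod k. The partially ordered set ([id_k,(1,…,k)] ∩ S_k, ≤), consisting of the permutation partitions lying on a geodesic between id_k and (1,…,k) with the geodesic order, is order-isomorphic to the set NC_k of non-crossing partitions of {1,…,k} ordered by refinement, via the map sending a permutation partition σ to the partition of {1,…,k} into the orbits (cycles) of the corresponding bijection. -/
open Sum
open scoped Classical

noncomputable section

namespace PartitionPaper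

variable {X : Type*}

/-- The number of blocks of a partition of `X`, encoded as a setoid on `X`. -/
def nc (p : Setoid X) : ℕ := Nat.card (Quotient p)

/-- The geodesic distance `d(p,p') = (nc p + nc p')/2 - nc (p ⊔ p')`. -/
def pdist (p q : Setoid X) : ℚ :=
  ((nc p : ℚ) + (nc q : ℚ)) / 2 - (nc (p ⊔ q) : ℚ)

/-- Geodesic order with base partition `b` : `p' ≤_b p`. -/
def geoLE (b p' p : Setoid X) : Prop := pdist b p' + pdist p' p = pdist b p

/-- Coarser-compatible order `p' ⊣_b p` : `p'` coarser than `p` and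
`nc (p' ⊔ b) = nc (p ⊔ b)`.  (In the setoid lattice, `p ≤ p'` means `p` is finer.) -/
def coarserComp (b p' p : Setoid X) : Prop :=
  p ≤ p' ∧ nc (p' ⊔ b) = nc (p ⊔ b)

/-- Finer-compatible order `p' ⊐_b p` : `p'` finer than `p` and
`nc p' - nc (p' ⊔ b) = nc p - nc (p ⊔ b)`. -/
def finerComp (b p' p : Setoid X) : Prop :=
  p' ≤ p ∧ (nc p' : ℤ) - (nc (p' ⊔ b) : ℤ) = (nc p : ℤ) - (nc (p ⊔ b) : ℤ)

/-- `p'` is obtained from `p` by gluing two blocks of `p` into one. -/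
def IsGluing (p p' : Setoid X) : Prop := p ≤ p' ∧ nc p' + 1 = nc p

/-- The Cayley graph on partitions of `X`: an edge iff one partition is obtained
from the other by gluing two of its blocks into one. -/
def glueGraph (X : Type*) : SimpleGraph (Setoid X) where
  Adj p q := IsGluing p q ∨ IsGluing q p
  symm := ⟨fun _ _ h => h.elim Or.inr Or.inl⟩
  loopless := by
    constructor
    intro p h
    rcases h with ⟨-, h⟩ | ⟨-, h⟩ <;> omega

/-- The segment `[p₁, p₂]` for the geodesic distance. -/
def seg (p₁ p₂ : Setoid X) : Set (Setoid X) :=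
  {p | pdist p₁ p + pdist p p₂ = pdist p₁ p₂}

/-- The defect of `p'` from being on `[b, p]`. -/
def df (b p' p : Setoid X) : ℚ := pdist b p' + pdist p' p - pdist b p

/-- Admissible one-step splits: `p'` is obtained by cutting a (pivotal) block of `p`
into two blocks in such a way that the join with `b` gains one block. -/
def Delta (b p : Setoid X) : Set (Setoid X) :=
  {p' | p' ≤ p ∧ nc p' = nc p + 1 ∧ nc (p' ⊔ b) = nc (p ⊔ b) + 1}

/-- The admissible splits `Sp_b(p) = ⋃ₘ Δ_b^m(p)`. -/
def Sp (b p : Setoid X) : Set (Setoid X) :=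
  {p' | Relation.ReflTransGen (fun u v => v ∈ Delta b u) p p'}

/-- The admissible gluings `Gl_b(p)`: partitions obtained by gluing blocks of `p`
without altering the number of blocks of the join with `b`. -/
def Gl (b p : Setoid X) : Set (Setoid X) :=
  {p' | p ≤ p' ∧ nc (p' ⊔ b) = nc (p ⊔ b)}

/-- `p'` is directly smaller than `p` for the relation `r`. -/
def DirectlySmaller (r : Setoid X → Setoid X → Prop) (p' p : Setoid X) : Prop :=
  r p' p ∧ p' ≠ p ∧ ¬ ∃ p'', p'' ≠ p ∧ p'' ≠ p' ∧ r p' p'' ∧ r p'' p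

/-- The block of the partition `p` corresponding to a class `c`. -/
def blockSet (p : Setoid X) (c : Quotient p) : Set X := {x | Quotient.mk p x = c}

/-- The number of blocks of `q` contained in the block `c` of `p`. -/
def numSubBlocks (q p : Setoid X) (c : Quotient p) : ℕ :=
  Nat.card {d : Quotient q // blockSet q d ⊆ blockSet p c}

/-- The number of blocks of `p` containing exactly `i` blocks of `q`. -/
def rcount (q p : Setoid X) (i : ℕ) : ℕ :=
  Nat.card {c : Quotient p // numSubBlocks q p c = i}

/-- The Möbius function of the refinement order:
`μ_f(q,p) = (-1)^(nc q - nc p) ∏_i ((i-1)!)^(r_i)` for `q` finer than `p`. -/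
def muf (q p : Setoid X) : ℤ :=
  (-1) ^ (nc q - nc p) *
    ∏ i ∈ Finset.range (nc q + 1), ((Nat.factorial (i - 1) : ℤ)) ^ (rcount q p i)

/-- `P_k`: partitions of `{1,…,k} ∪ {1',…,k'}`, the left summand being the
unprimed (top) row and the right summand the primed (bottom) row. -/
abbrev Pk (k : ℕ) := Setoid (Fin k ⊕ Fin k)

/-- The identity partition `id_k = {{i, i'} : 1 ≤ i ≤ k}`. -/
def idk (k : ℕ) : Pk k := Setoid.ker (Sum.elim id id)

/-- The permutation partition associated with `σ`, with blocks `{i, σ(i)'}`. -/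
def permPartition {k : ℕ} (σ : Equiv.Perm (Fin k)) : Pk k :=
  Setoid.ker (Sum.elim id σ.symm)

/-- `S_k`, the set of permutation partitions. -/
def Sk (k : ℕ) : Set (Pk k) := Set.range (permPartition (k := k))

/-- `B_k`, the set of Brauer partitions: all blocks have exactly two elements. -/
def Bk (k : ℕ) : Set (Pk k) := {p | ∀ x, Nat.card {y | p.r x y} = 2}

/-- Embedding of the top/bottom rows of the upper diagram `q` into the
three-row diagram (top ⊕ (middle ⊕ bottom)). -/
def upMap (k : ℕ) : Fin k ⊕ Fin k → Fin k ⊕ (Fin k ⊕ Fin k) :=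
  Sum.elim Sum.inl (fun i => Sum.inr (Sum.inl i))

/-- Embedding of the top/bottom rows of the lower diagram `p` into the
three-row diagram. -/
def downMap (k : ℕ) : Fin k ⊕ Fin k → Fin k ⊕ (Fin k ⊕ Fin k) :=
  Sum.elim (fun i => Sum.inr (Sum.inl i)) (fun i => Sum.inr (Sum.inr i))

/-- The partition of the three-row diagram obtained by stacking a diagram of `q`
on top of a diagram of `p` (identifying the bottom row of `q` with the top row
of `p`): the equivalence relation generated by the copies of `q` and `p`. -/
def stackSetoid {k : ℕ} (p q : Pk k) : Setoid (Fin k ⊕ (Fin k ⊕ Fin k)) :=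
  sInf {s | ∀ x y,
    ((∃ a b, upMap k a = x ∧ upMap k b = y ∧ q.r a b) ∨
     (∃ a b, downMap k a = x ∧ downMap k b = y ∧ p.r a b)) → s.r x y}

/-- The composition `p ∘ q` (a diagram of `q` stacked above a diagram of `p`),
obtained by restricting the stacked partition to the outer rows. -/
def comp {k : ℕ} (p q : Pk k) : Pk k :=
  Setoid.comap (Sum.elim Sum.inl (fun i => Sum.inr (Sum.inr i))) (stackSetoid p q)

/-- `κ(p,q)`: the number of connected components of the stacked diagram entirely
contained in the middle row. -/
def kappaP {k : ℕ} (p q : Pk k) : ℕ :=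
  Nat.card {c : Quotient (stackSetoid p q) //
    ∀ x, Quotient.mk (stackSetoid p q) x = c → ∃ i : Fin k, x = Sum.inr (Sum.inl i)}

/-- The transpose `ᵗp`, exchanging the two rows. -/
def transpose {k : ℕ} (p : Pk k) : Pk k := Setoid.comap Sum.swap p

/-- The disjoint-union partition on a sum type. -/
def sumSetoid {α β : Type*} (p : Setoid α) (q : Setoid β) : Setoid (α ⊕ β) :=
  Setoid.ker (Sum.map (Quotient.mk p) (Quotient.mk q))

/-- Reindexing of the rows for the tensor product. -/
def reindex (k l : ℕ) :
    Fin (k + l) ⊕ Fin (k + l) → (Fin k ⊕ Fin k) ⊕ (Fin l ⊕ Fin l) :=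
  Sum.elim
    (fun j => Sum.elim (fun a => Sum.inl (Sum.inl a)) (fun b => Sum.inr (Sum.inl b))
      (finSumFinEquiv.symm j))
    (fun j => Sum.elim (fun a => Sum.inl (Sum.inr a)) (fun b => Sum.inr (Sum.inr b))
      (finSumFinEquiv.symm j))

/-- The tensor product `p ⊗ q ∈ P_{k+l}`: a diagram of `p` placed to the left of
a diagram of `q`. -/
def tensor {k l : ℕ} (p : Pk k) (q : Pk l) : Pk (k + l) :=
  Setoid.comap (reindex k l) (sumSetoid p q)

/-- The `≺`-defect `η(p,q)`. -/
def eta {k : ℕ} (p q : Pk k) : ℚ :=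
  pdist (idk k) p + pdist (idk k) q - pdist (idk k) (comp p q)
    - ((k : ℚ) + (nc (comp p q) : ℚ) - (nc p : ℚ) - (nc q : ℚ)) / 2 - (kappaP p q : ℚ)

/-- The Kreweras complement of `p'` in `p`: the set of `p''` with `p = p' ∘ p''`
realizing equality in the `≺`-defect inequality. -/
def Krew {k : ℕ} (p p' : Pk k) : Set (Pk k) :=
  {p'' | comp p' p'' = p ∧ eta p' p'' = 0}

/-- `p' ≺ p` : `p'` is an admissible prefix of `p`. -/
def prec {k : ℕ} (p' p : Pk k) : Prop :=
  ∃ p'', comp p' p'' = p ∧ eta p' p'' = 0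

/-- The partition of `{1,…,k}` into the orbits (cycles) of the permutation `σ`. -/
def cycleSetoid {k : ℕ} (σ : Equiv.Perm (Fin k)) : Setoid (Fin k) :=
  ⟨σ.SameCycle,
    ⟨fun x => Equiv.Perm.SameCycle.refl σ x, fun h => h.symm, fun h₁ h₂ => h₁.trans h₂⟩⟩

/-- A partition of `{1,…,k}` is non-crossing if there are no `a < b < c < d` with
`a, c` in one block and `b, d` in a different block. -/
def NonCrossing {k : ℕ} (π : Setoid (Fin k)) : Prop :=
  ¬ ∃ a b c d : Fin k, a < b ∧ b < c ∧ c < d ∧ π.r a c ∧ π.r b d ∧ ¬ π.r a b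

/-- The map sending a permutation partition to the partition of `{1,…,k}` into
the orbits of the corresponding bijection (the blocks of `p ⊔ id_k` restricted
to the top row). -/
def orbitMap {k : ℕ} (p : Pk k) : Setoid (Fin k) :=
  Setoid.comap (Sum.inl : Fin k → Fin k ⊕ Fin k) (p ⊔ idk k)

/-- The permutation `(1,k+1)(2,k+2)⋯(k,2k)` of `{1,…,2k}`. -/
def tauPerm (k : ℕ) : Equiv.Perm (Fin (k + k)) :=
  (finSumFinEquiv.symm.trans (Equiv.sumComm (Fin k) (Fin k))).trans finSumFinEquiv

/-- The left part of a partition in `P_{k₁+k₂}`. -/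
def leftPart {k₁ k₂ : ℕ} (p : Pk (k₁ + k₂)) : Pk k₁ :=
  Setoid.comap (Sum.map (Fin.castAdd k₂) (Fin.castAdd k₂)) p

/-- The right part of a partition in `P_{k₁+k₂}`. -/
def rightPart {k₁ k₂ : ℕ} (p : Pk (k₁ + k₂)) : Pk k₂ :=
  Setoid.comap (Sum.map (Fin.natAdd k₁) (Fin.natAdd k₁)) p

/-- The `p`-moment `m_p(E_N) = Tr_N(E_N ᵗp)/N^{nc(p ⊔ id_k)}
`= ∑_{p'} (E_N)_{p'} N^{nc(p ⊔ p') - nc(p ⊔ id_k)}`. -/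
def momentF {k : ℕ} (E : ℕ → Pk k → ℂ) (p : Pk k) (N : ℕ) : ℂ :=
  ∑ᶠ p' : Pk k, E N p' * (N : ℂ) ^ ((nc (p ⊔ p') : ℤ) - (nc (p ⊔ idk k) : ℤ))

/-- The `p`-cumulant `κ_p(E_N) = N^{nc p - nc (p ⊔ id_k)} (E_N)_p`. -/
def cumulantF {k : ℕ} (E : ℕ → Pk k → ℂ) (p : Pk k) (N : ℕ) : ℂ :=
  (N : ℂ) ^ ((nc p : ℤ) - (nc (p ⊔ idk k) : ℤ)) * E N p


set_option linter.unusedSectionVars false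
set_option linter.unusedVariables false
set_option maxHeartbeats 1000000

open Equiv

section Count
variable {X : Type*} [Fintype X]

lemma card_lt_aux {α β : Type*} [Fintype α] (f : α → β) (hs : Function.Surjective f)
    {a1 a2 : α} (hne : a1 ≠ a2) (h : f a1 = f a2) : Nat.card β < Nat.card α := by
  have : Fintype β := Fintype.ofSurjective f hs
  rw [Nat.card_eq_fintype_card, Nat.card_eq_fintype_card]
  exact Fintype.card_lt_of_surjective_not_injective f hs (fun hinj => hne (hinj h))

def joinMap {p q : Setoid X} (h : p ≤ q) : Quotient p → Quotient q :=
  Quotient.map' id (fun _ _ hxy => h hxy)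

lemma joinMap_mk {p q : Setoid X} (h : p ≤ q) (x : X) :
    joinMap h (Quotient.mk p x) = Quotient.mk q x := rfl

lemma joinMap_surj {p q : Setoid X} (h : p ≤ q) : Function.Surjective (joinMap h) := by
  intro y; induction y using Quotient.ind; exact ⟨Quotient.mk p _, rfl⟩

lemma nc_mono {p q : Setoid X} (h : p ≤ q) : nc q ≤ nc p :=
  Nat.card_le_card_of_surjective _ (joinMap_surj h)

lemma nc_le_card (p : Setoid X) : nc p ≤ Fintype.card X := by
  rw [← Nat.card_eq_fintype_card]
  exact Nat.card_le_card_of_surjective _ Quotient.mk''_surjective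

lemma eq_of_le_of_nc_le {p q : Setoid X} (h : p ≤ q) (hc : nc p ≤ nc q) : p = q := by
  have hinj : Function.Injective (joinMap h) := by
    by_contra hni
    simp only [Function.Injective, not_forall] at hni
    obtain ⟨a1, a2, hfa, hne⟩ := hni
    have := card_lt_aux (joinMap h) (joinMap_surj h) hne hfa
    unfold nc at hc
    omega
  refine le_antisymm h (fun {x y} hq => ?_)
  have : joinMap h (Quotient.mk p x) = joinMap h (Quotient.mk p y) := by
    rw [joinMap_mk, joinMap_mk]; exact Quotient.sound hq
  exact Quotient.exact (hinj this)

lemma nc_bot : nc (⊥ : Setoid X) = Fintype.card X := by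
  rw [nc, ← Nat.card_eq_fintype_card]
  refine Nat.card_congr (Equiv.ofBijective (Quotient.mk _) ⟨?_, Quotient.mk''_surjective⟩).symm
  intro x y hxy
  have h2 : (⊥ : Setoid X) x y := Quotient.exact hxy
  rwa [Setoid.bot_def] at h2

lemma nc_top [Nonempty X] : nc (⊤ : Setoid X) = 1 := by
  rw [nc, Nat.card_eq_one_iff_unique]
  constructor
  · constructor
    intro u v
    induction u using Quotient.ind with | _ x =>
    induction v using Quotient.ind with | _ y =>
    exact Quotient.sound trivial
  · exact ⟨Quotient.mk _ (Classical.arbitrary X)⟩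

lemma eq_bot_of_nc (p : Setoid X) (h : Fintype.card X ≤ nc p) : p = ⊥ :=
  (eq_of_le_of_nc_le bot_le (by rw [nc_bot]; exact h)).symm

/-- the setoid whose only nontrivial relation is `a ~ b`. -/
def pairS (a b : X) : Setoid X :=
  ⟨fun x y => x = y ∨ (x = a ∧ y = b) ∨ (x = b ∧ y = a), by
    refine ⟨fun x => Or.inl rfl, ?_, ?_⟩
    · rintro x y (rfl | ⟨rfl, rfl⟩ | ⟨rfl, rfl⟩) <;> tauto
    · rintro x y z h1 h2
      rcases h1 with h1 | ⟨ha, hb⟩ | ⟨ha, hb⟩ <;> rcases h2 with h2 | ⟨hc, hd⟩ | ⟨hc, hd⟩ <;>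
        subst_vars <;> tauto⟩

lemma pairS_rel {a b x y : X} :
    pairS a b x y ↔ x = y ∨ (x = a ∧ y = b) ∨ (x = b ∧ y = a) := Iff.rfl

lemma sup_pairS_rel (s : Setoid X) (a b : X) (x y : X) :
    (s ⊔ pairS a b) x y ↔ s x y ∨ (s x a ∧ s b y) ∨ (s x b ∧ s a y) := by
  have heqv : Equivalence (fun x y => s x y ∨ (s x a ∧ s b y) ∨ (s x b ∧ s a y)) := by
    refine ⟨fun x => Or.inl (s.refl x), ?_, ?_⟩
    · rintro u v (h | ⟨h1, h2⟩ | ⟨h1, h2⟩)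
      · exact Or.inl (s.symm h)
      · exact Or.inr (Or.inr ⟨s.symm h2, s.symm h1⟩)
      · exact Or.inr (Or.inl ⟨s.symm h2, s.symm h1⟩)
    · rintro u v w (h | ⟨h1, h2⟩ | ⟨h1, h2⟩) (h' | ⟨h1', h2'⟩ | ⟨h1', h2'⟩)
      · exact Or.inl (s.trans h h')
      · exact Or.inr (Or.inl ⟨s.trans h h1', h2'⟩)
      · exact Or.inr (Or.inr ⟨s.trans h h1', h2'⟩)
      · exact Or.inr (Or.inl ⟨h1, s.trans h2 h'⟩)
      · exact Or.inl (s.trans (s.trans h1 (s.symm h1')) (s.trans (s.symm h2) h2'))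
      · exact Or.inl (s.trans h1 h2')
      · exact Or.inr (Or.inr ⟨h1, s.trans h2 h'⟩)
      · exact Or.inl (s.trans h1 h2')
      · exact Or.inl (s.trans (s.trans h1 (s.symm h1')) (s.trans (s.symm h2) h2'))
  let t : Setoid X := ⟨_, heqv⟩
  constructor
  · intro h
    have h1 : s ≤ t := fun {x y} hxy => Or.inl hxy
    have h2 : pairS a b ≤ t := by
      rintro u v (rfl | ⟨rfl, rfl⟩ | ⟨rfl, rfl⟩)
      · exact Or.inl (s.refl u)
      · exact Or.inr (Or.inl ⟨s.refl u, s.refl v⟩)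
      · exact Or.inr (Or.inr ⟨s.refl u, s.refl v⟩)
    exact (sup_le h1 h2) h
  · have hs : s ≤ s ⊔ pairS a b := le_sup_left
    have hp : pairS a b ≤ s ⊔ pairS a b := le_sup_right
    have hab : (s ⊔ pairS a b) a b := hp (Or.inr (Or.inl ⟨rfl, rfl⟩))
    rintro (h | ⟨h1, h2⟩ | ⟨h1, h2⟩)
    · exact hs h
    · exact Setoid.trans' _ (Setoid.trans' _ (hs h1) hab) (hs h2)
    · exact Setoid.trans' _ (Setoid.trans' _ (hs h1) (Setoid.symm' _ hab)) (hs h2)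

lemma nc_sup_pairS_ge (s : Setoid X) (a b : X) : nc s ≤ nc (s ⊔ pairS a b) + 1 := by
  classical
  set t := s ⊔ pairS a b with ht
  have hwd : ∀ x y : X, s x y →
      (if s x b ∧ ¬ s x a then (Sum.inr () : Quotient t ⊕ Unit) else Sum.inl (Quotient.mk t x))
    = (if s y b ∧ ¬ s y a then (Sum.inr () : Quotient t ⊕ Unit) else Sum.inl (Quotient.mk t y)) := by
    intro x y hxy
    have h1 : (s x b ∧ ¬ s x a) ↔ (s y b ∧ ¬ s y a) := by
      constructor
      · rintro ⟨u, v⟩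
        exact ⟨s.trans (s.symm hxy) u, fun w => v (s.trans hxy w)⟩
      · rintro ⟨u, v⟩
        exact ⟨s.trans hxy u, fun w => v (s.trans (s.symm hxy) w)⟩
    by_cases hx : s x b ∧ ¬ s x a
    · rw [if_pos hx, if_pos (h1.mp hx)]
    · rw [if_neg hx, if_neg (fun h => hx (h1.mpr h))]
      exact congrArg _ (Quotient.sound ((le_sup_left : s ≤ t) hxy))
  let g : Quotient s → Quotient t ⊕ Unit :=
    Quotient.lift (fun x => if s x b ∧ ¬ s x a then (Sum.inr () : Quotient t ⊕ Unit)
      else Sum.inl (Quotient.mk t x)) hwd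
  have hginj : Function.Injective g := by
    intro u v
    induction u using Quotient.ind with | _ x =>
    induction v using Quotient.ind with | _ y =>
    intro hg
    simp only [g, Quotient.lift_mk] at hg
    by_cases hx : s x b ∧ ¬ s x a <;> by_cases hy : s y b ∧ ¬ s y a
    · exact Quotient.sound (s.trans hx.1 (s.symm hy.1))
    · rw [if_pos hx, if_neg hy] at hg; exact absurd hg (by simp)
    · rw [if_neg hx, if_pos hy] at hg; exact absurd hg (by simp)
    · rw [if_neg hx, if_neg hy] at hg
      have hg' : Quotient.mk t x = Quotient.mk t y := by injection hg
      have := Quotient.exact hg'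
      rw [show t = s ⊔ pairS a b from rfl] at this
      rcases (sup_pairS_rel s a b x y).mp this with h | ⟨h1, h2⟩ | ⟨h1, h2⟩
      · exact Quotient.sound h
      · -- s x a ∧ s b y ; then s y b, so by hy : s y a, so s x y
        have hyb : s y b := s.symm h2
        have hya : s y a := by
          by_contra hna; exact hy ⟨hyb, hna⟩
        exact Quotient.sound (s.trans h1 (s.symm hya))
      · have hxb : s x b := h1
        have hxa : s x a := by
          by_contra hna; exact hx ⟨hxb, hna⟩
        exact Quotient.sound (s.trans hxa h2)
  calc nc s ≤ Nat.card (Quotient t ⊕ Unit) := Nat.card_le_card_of_injective g hginj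
    _ = nc t + 1 := by
      have : Finite (Quotient t) := Quotient.finite t
      simp [Nat.card_sum, nc]

lemma nc_sup_pairS (s : Setoid X) {a b : X} (h : ¬ s a b) :
    nc (s ⊔ pairS a b) + 1 = nc s := by
  have h1 := nc_sup_pairS_ge s a b
  have h2 : nc (s ⊔ pairS a b) < nc s := by
    refine card_lt_aux (joinMap (le_sup_left : s ≤ s ⊔ pairS a b)) (joinMap_surj _)
      (a1 := Quotient.mk s a) (a2 := Quotient.mk s b) ?_ ?_
    · intro hc; exact h (Quotient.exact hc)
    · rw [joinMap_mk, joinMap_mk]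
      exact Quotient.sound ((le_sup_right : pairS a b ≤ _) (Or.inr (Or.inl ⟨rfl, rfl⟩)))
  omega


end Count

section PermLemmas

variable {k : ℕ}

/-- number of orbits of a permutation. -/
def cN (σ : Perm (Fin k)) : ℕ := nc (cycleSetoid σ)

lemma cyc_rel {σ : Perm (Fin k)} {x y : Fin k} : cycleSetoid σ x y ↔ σ.SameCycle x y := Iff.rfl

lemma cyc_rel_apply (σ : Perm (Fin k)) (x : Fin k) : cycleSetoid σ x (σ x) :=
  ⟨1, by simp⟩

lemma Perm.apply_inv_self {α : Type*} (f : Equiv.Perm α) (x : α) : f (f⁻¹ x) = x :=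
  f.apply_symm_apply x

lemma Perm.inv_apply_self {α : Type*} (f : Equiv.Perm α) (x : α) : f⁻¹ (f x) = x :=
  f.symm_apply_apply x

lemma cyc_le {σ : Perm (Fin k)} {s : Setoid (Fin k)} (h : ∀ x, s x (σ x)) :
    cycleSetoid σ ≤ s := by
  intro x y hxy
  obtain ⟨m, rfl⟩ := hxy
  induction m using Int.induction_on with
  | zero => simpa using s.refl x
  | succ n ih =>
    have hstep : (σ ^ ((n : ℤ) + 1)) x = σ ((σ ^ (n : ℤ)) x) := by
      rw [show (n : ℤ) + 1 = 1 + n by ring, zpow_one_add]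
      rfl
    rw [hstep]
    exact s.trans ih (h _)
  | pred n ih =>
    have hstep : (σ ^ (-(n : ℤ) - 1)) x = σ⁻¹ ((σ ^ (-(n : ℤ))) x) := by
      rw [show -(n : ℤ) - 1 = -1 + -n by ring, zpow_add]
      rfl
    rw [hstep]
    set y := (σ ^ (-(n : ℤ))) x
    have := h (σ⁻¹ y)
    simp only [Perm.apply_inv_self] at this
    exact s.trans ih (s.symm this)

lemma cyc_one : cycleSetoid (1 : Perm (Fin k)) = ⊥ := by
  refine le_antisymm ?_ ?_
  · intro x y h
    have : x = y := Perm.sameCycle_one.mp h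
    show (⊥ : Setoid (Fin k)) x y
    rw [Setoid.bot_def]; exact this
  · intro x y h
    have hxy : x = y := by rwa [Setoid.bot_def] at h
    exact hxy ▸ Perm.SameCycle.refl _ x

lemma cN_one : cN (1 : Perm (Fin k)) = k := by
  rw [cN, cyc_one, nc_bot, Fintype.card_fin]

lemma eq_one_of_cN {σ : Perm (Fin k)} (h : k ≤ cN σ) : σ = 1 := by
  have hb : cycleSetoid σ = ⊥ := eq_bot_of_nc _ (by rwa [Fintype.card_fin])
  ext x
  have := cyc_rel_apply σ x
  rw [hb, Setoid.bot_def] at this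
  simp [← this]

lemma cyc_mul_swap_le (σ : Perm (Fin k)) (a b : Fin k) :
    cycleSetoid (σ * Equiv.swap a b) ≤ cycleSetoid σ ⊔ pairS a b := by
  refine cyc_le (fun x => ?_)
  have h1 : (pairS a b) x (Equiv.swap a b x) := by
    rcases eq_or_ne x a with rfl | hxa
    · rw [Equiv.swap_apply_left]; exact Or.inr (Or.inl ⟨rfl, rfl⟩)
    · rcases eq_or_ne x b with rfl | hxb
      · rw [Equiv.swap_apply_right]; exact Or.inr (Or.inr ⟨rfl, rfl⟩)
      · rw [Equiv.swap_apply_of_ne_of_ne hxa hxb]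
  have h2 : (cycleSetoid σ) (Equiv.swap a b x) (σ (Equiv.swap a b x)) := cyc_rel_apply _ _
  exact Setoid.trans' _ ((le_sup_right : pairS a b ≤ _) h1)
    ((le_sup_left : cycleSetoid σ ≤ _) h2)

lemma sameCycle_mul_swap_of_not {σ : Perm (Fin k)} {a b : Fin k} (hab : a ≠ b)
    (h : ¬ σ.SameCycle a b) : (σ * Equiv.swap a b).SameCycle a b := by
  set τ := σ * Equiv.swap a b with hτ
  have hτa : τ a = σ b := by simp [hτ]
  have hPex : ∃ j, (σ ^ (j + 1)) b = b := by
    refine ⟨orderOf σ - 1, ?_⟩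
    have ho : 0 < orderOf σ := orderOf_pos σ
    rw [Nat.sub_add_cancel ho, pow_orderOf_eq_one]; rfl
  set m := Nat.find hPex with hm
  have hmspec : (σ ^ (m + 1)) b = b := Nat.find_spec hPex
  have key : ∀ j, j ≤ m → (τ ^ j) (σ b) = (σ ^ j) (σ b) := by
    intro j hj
    induction j with
    | zero => rfl
    | succ n ih =>
      have hn : n ≤ m := le_trans (Nat.le_succ n) hj
      have hy : (σ ^ n) (σ b) = (σ ^ (n + 1)) b := by
        rw [pow_succ]; rfl
      have hyb : (σ ^ (n + 1)) b ≠ b := by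
        intro hc
        exact absurd hc (Nat.find_min hPex (by omega))
      have hya : (σ ^ (n + 1)) b ≠ a := by
        intro hc
        refine h ⟨-((n : ℤ) + 1), ?_⟩
        rw [← hc, ← zpow_natCast σ (n + 1), ← Perm.mul_apply, ← zpow_add]
        simp only [Nat.cast_add, Nat.cast_one, neg_add_cancel, zpow_zero, Perm.one_apply]
      have hcomm : ∀ (j : ℕ) (x : Fin k), (σ ^ (j + 1)) x = σ ((σ ^ j) x) := by
        intro j x; rw [pow_succ']; rfl
      have hτcomm : (τ ^ (n + 1)) (σ b) = τ ((τ ^ n) (σ b)) := by rw [pow_succ']; rfl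
      rw [hτcomm, ih hn, hy, hτ, Perm.mul_apply,
        Equiv.swap_apply_of_ne_of_ne hya hyb, ← hy, hcomm n (σ b)]
  refine ⟨(m + 1 : ℕ), ?_⟩
  have : (τ ^ (m + 1 : ℕ)) a = b := by
    rw [pow_succ, Perm.mul_apply, hτa, key m le_rfl]
    have : (σ ^ m) (σ b) = (σ ^ (m + 1)) b := by rw [pow_succ]; rfl
    rw [this, hmspec]
  rw [zpow_natCast]
  exact this

lemma not_sameCycle_mul_swap {σ : Perm (Fin k)} {a b : Fin k} (hab : a ≠ b)
    (h : σ.SameCycle a b) : ¬ (σ * Equiv.swap a b).SameCycle a b := by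
  set τ := σ * Equiv.swap a b with hτ
  -- d : least positive exponent with σ^d b = a
  have hex : ∃ d, 0 < d ∧ (σ ^ d) b = a := by
    obtain ⟨i, hi, hpow⟩ := (h.symm).exists_pow_eq'
    rcases Nat.eq_zero_or_pos i with rfl | hipos
    · exfalso; exact hab (by simpa using hpow.symm)
    · exact ⟨i, hipos, hpow⟩
  set d := Nat.find hex with hd
  obtain ⟨hdpos, hdspec⟩ : 0 < d ∧ (σ ^ d) b = a := Nat.find_spec hex
  have hlt : ∀ i, 0 < i → i < d → (σ ^ i) b ≠ a := by
    intro i hipos hid hc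
    exact absurd ⟨hipos, hc⟩ (Nat.find_min hex hid)
  have hnotb : ∀ i, 0 < i → i ≤ d → (σ ^ i) b ≠ b := by
    intro i hipos hid hc
    rcases eq_or_lt_of_le hid with rfl | hilt
    · exact hab (hc ▸ hdspec).symm
    · -- σ^(d-i) b = a with 0 < d - i < d
      have : (σ ^ (d - i)) b = a := by
        have : (σ ^ (d - i)) ((σ ^ i) b) = a := by
          rw [← Perm.mul_apply, ← pow_add, Nat.sub_add_cancel (le_of_lt hilt)]
          exact hdspec
        rwa [hc] at this
      exact hlt (d - i) (by omega) (by omega) this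
  have horb : ∀ j, ∃ i, 0 < i ∧ i ≤ d ∧ (τ ^ j) a = (σ ^ i) b := by
    intro j
    induction j with
    | zero => exact ⟨d, hdpos, le_rfl, hdspec.symm⟩
    | succ n ih =>
      obtain ⟨i, hipos, hid, hio⟩ := ih
      rcases eq_or_lt_of_le hid with rfl | hilt
      · -- at a, next is σ b
        refine ⟨1, one_pos, hdpos, ?_⟩
        rw [pow_succ', Perm.mul_apply, hio, hdspec, hτ, Perm.mul_apply,
          Equiv.swap_apply_left, pow_one]
      · refine ⟨i + 1, by omega, by omega, ?_⟩
        rw [pow_succ', Perm.mul_apply, hio, hτ, Perm.mul_apply,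
          Equiv.swap_apply_of_ne_of_ne (hlt i hipos hilt) (hnotb i hipos hid)]
        rw [pow_succ']; rfl
  intro hc
  obtain ⟨j, _, hj⟩ := hc.exists_pow_eq'
  obtain ⟨i, hipos, hid, hio⟩ := horb j
  rw [hj] at hio
  exact hnotb i hipos hid hio.symm

lemma cyc_merge {σ : Perm (Fin k)} {a b : Fin k} (hab : a ≠ b) (h : ¬ σ.SameCycle a b) :
    cycleSetoid (σ * Equiv.swap a b) = cycleSetoid σ ⊔ pairS a b := by
  set τ := σ * Equiv.swap a b with hτ
  have hsc : τ.SameCycle a b := sameCycle_mul_swap_of_not hab h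
  have hpair : pairS a b ≤ cycleSetoid τ := by
    rintro x y (rfl | ⟨rfl, rfl⟩ | ⟨rfl, rfl⟩)
    · exact Perm.SameCycle.refl _ _
    · exact hsc
    · exact hsc.symm
  have hσart : σ = τ * Equiv.swap a b := by
    rw [hτ, mul_assoc, Equiv.swap_mul_self, mul_one]
  have hστ : cycleSetoid σ ≤ cycleSetoid τ := by
    have := cyc_mul_swap_le τ a b
    rw [← hσart] at this
    exact le_trans this (sup_le le_rfl hpair)
  exact le_antisymm (cyc_mul_swap_le σ a b) (sup_le hστ hpair)

lemma cN_merge {σ : Perm (Fin k)} {a b : Fin k} (hab : a ≠ b) (h : ¬ σ.SameCycle a b) :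
    cN (σ * Equiv.swap a b) + 1 = cN σ := by
  rw [cN, cN, cyc_merge hab h]
  exact nc_sup_pairS _ h

lemma cN_split {σ : Perm (Fin k)} {a b : Fin k} (hab : a ≠ b) (h : σ.SameCycle a b) :
    cN σ + 1 = cN (σ * Equiv.swap a b) := by
  have hns := not_sameCycle_mul_swap hab h
  have := cN_merge hab hns
  rw [mul_assoc, Equiv.swap_mul_self, mul_one] at this
  omega

lemma cyc_split {σ : Perm (Fin k)} {a b : Fin k} (hab : a ≠ b) (h : σ.SameCycle a b) :
    cycleSetoid σ = cycleSetoid (σ * Equiv.swap a b) ⊔ pairS a b := by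
  have hns := not_sameCycle_mul_swap hab h
  have := cyc_merge hab hns
  rwa [mul_assoc, Equiv.swap_mul_self, mul_one] at this

-- block of x as a finset
def blockF (π : Setoid (Fin k)) (x : Fin k) : Finset (Fin k) :=
  Finset.univ.filter (fun y => π x y)

lemma mem_blockF {π : Setoid (Fin k)} {x y : Fin k} : y ∈ blockF π x ↔ π x y := by
  simp [blockF]

def gtF (π : Setoid (Fin k)) (x : Fin k) : Finset (Fin k) :=
  (blockF π x).filter (fun y => x < y)

lemma mem_gtF {π : Setoid (Fin k)} {x y : Fin k} : y ∈ gtF π x ↔ π x y ∧ x < y := by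
  simp [gtF, mem_blockF, Finset.mem_filter]

/-- the next element of the block of `x`, in increasing cyclic order. -/
def nextF (π : Setoid (Fin k)) (x : Fin k) : Fin k :=
  if h : (gtF π x).Nonempty then (gtF π x).min' h
  else (blockF π x).min' ⟨x, mem_blockF.mpr (π.refl x)⟩

lemma nextF_rel (π : Setoid (Fin k)) (x : Fin k) : π x (nextF π x) := by
  rw [nextF]
  split_ifs with h
  · have := (gtF π x).min'_mem h
    exact (mem_gtF.mp this).1
  · have := (blockF π x).min'_mem ⟨x, mem_blockF.mpr (π.refl x)⟩
    exact mem_blockF.mp this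

lemma nextF_spec_gt {π : Setoid (Fin k)} {x z : Fin k} (hz : π x z) (hxz : x < z) :
    x < nextF π x ∧ nextF π x ≤ z := by
  have hne : (gtF π x).Nonempty := ⟨z, mem_gtF.mpr ⟨hz, hxz⟩⟩
  rw [nextF, dif_pos hne]
  exact ⟨(mem_gtF.mp ((gtF π x).min'_mem hne)).2,
    Finset.min'_le _ _ (mem_gtF.mpr ⟨hz, hxz⟩)⟩

lemma nextF_spec_min {π : Setoid (Fin k)} {x : Fin k} (h : ∀ z, π x z → z ≤ x) :
    ∀ z, π x z → nextF π x ≤ z := by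
  have hne : ¬ (gtF π x).Nonempty := by
    rintro ⟨z, hz⟩
    rw [mem_gtF] at hz
    exact absurd (h z hz.1) (not_le.mpr hz.2)
  rw [nextF, dif_neg hne]
  intro z hz
  exact Finset.min'_le _ _ (mem_blockF.mpr hz)

lemma nextF_le_of_gt {π : Setoid (Fin k)} {x z : Fin k} (hz : π x z) (hxz : x < z)
    {w : Fin k} (hw : π x w) (hxw : x < w) : nextF π x ≤ w := by
  have hne : (gtF π x).Nonempty := ⟨z, mem_gtF.mpr ⟨hz, hxz⟩⟩
  rw [nextF, dif_pos hne]
  exact Finset.min'_le _ _ (mem_gtF.mpr ⟨hw, hxw⟩)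

lemma nextF_congr {π π' : Setoid (Fin k)} {x : Fin k} (h : ∀ y, π x y ↔ π' x y) :
    nextF π x = nextF π' x := by
  have hb : blockF π x = blockF π' x := by
    ext y; rw [mem_blockF, mem_blockF, h]
  have hg : gtF π x = gtF π' x := by rw [gtF, gtF, hb]
  rw [nextF, nextF]
  simp only [hg, hb]

lemma nextF_inj (π : Setoid (Fin k)) : Function.Injective (nextF π) := by
  have aux : ∀ x y : Fin k, nextF π x = nextF π y → π x y → x < y → False := by
    intro x y hxy hrel hlt
    obtain ⟨h1, h2⟩ := nextF_spec_gt hrel hlt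
    by_cases hy : ∃ z, π y z ∧ y < z
    · obtain ⟨z, hz1, hz2⟩ := hy
      have hgt := (nextF_spec_gt hz1 hz2).1
      rw [← hxy] at hgt
      exact absurd hgt (not_lt.mpr h2)
    · push_neg at hy
      have hmin := nextF_spec_min (fun z hz => hy z hz) x (π.symm hrel)
      rw [← hxy] at hmin
      exact absurd (lt_of_lt_of_le h1 hmin) (lt_irrefl x)
  intro x y hxy
  by_contra hne
  have hxyrel : π x y :=
    π.trans (nextF_rel π x) (by rw [hxy]; exact π.symm (nextF_rel π y))
  rcases lt_or_gt_of_ne hne with h | h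
  · exact aux x y hxy hxyrel h
  · exact aux y x hxy.symm (π.symm hxyrel) h

/-- the permutation of `Fin k` cycling each block of `π` in increasing order. -/
def σof (π : Setoid (Fin k)) : Perm (Fin k) :=
  Equiv.ofBijective (nextF π) (Finite.injective_iff_bijective.mp (nextF_inj π))

lemma σof_apply (π : Setoid (Fin k)) (x : Fin k) : σof π x = nextF π x := rfl

lemma σof_rel (π : Setoid (Fin k)) (x : Fin k) : π x (σof π x) := nextF_rel π x

/-- the orbits of `σof π` are exactly the blocks of `π`. -/
lemma cyc_σof (π : Setoid (Fin k)) : cycleSetoid (σof π) = π := by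
  refine le_antisymm (cyc_le (fun x => σof_rel π x)) ?_
  have key : ∀ n : ℕ, ∀ x y : Fin k, (y : ℕ) - (x : ℕ) = n → x ≤ y → π x y →
      (σof π).SameCycle x y := by
    intro n
    induction n using Nat.strong_induction_on with
    | _ n ih =>
      intro x y hn hxy hrel
      rcases eq_or_lt_of_le hxy with rfl | hlt
      · exact Perm.SameCycle.refl _ _
      · obtain ⟨h1, h2⟩ := nextF_spec_gt hrel hlt
        set z := nextF π x with hz
        have hsc1 : (σof π).SameCycle x z := ⟨1, by simp [σof_apply, hz]⟩
        have hrelz : π z y := π.trans (π.symm (nextF_rel π x)) hrel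
        rcases eq_or_lt_of_le h2 with rfl | hlt2
        · exact hsc1
        · have : (y : ℕ) - (z : ℕ) < n := by
            have hxz : (x : ℕ) < (z : ℕ) := h1
            have hzy : (z : ℕ) < (y : ℕ) := hlt2
            omega
          exact hsc1.trans (ih _ this z y rfl (le_of_lt hlt2) hrelz)
  intro x y hrel
  rcases le_total x y with h | h
  · exact key _ x y rfl h hrel
  · exact (key _ y x rfl h (π.symm hrel)).symm

lemma σof_top_eq_finRotate : σof (⊤ : Setoid (Fin k)) = finRotate k := by
  match k with
  | 0 => ext x; exact absurd x.2 (by omega)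
  | (n + 1) =>
    have hT : ∀ u v : Fin (n + 1), (⊤ : Setoid (Fin (n + 1))) u v := by
      intro u v
      rw [Setoid.top_def]
      trivial
    ext x
    rw [σof_apply, finRotate_succ_apply]
    rcases eq_or_lt_of_le (Fin.le_last x) with rfl | hlast
    · -- last + 1 = 0 ; next = min of whole block = 0
      have h0 : ∀ z : Fin (n+1), (⊤ : Setoid (Fin (n+1))) (Fin.last n) z → z ≤ Fin.last n :=
        fun z _ => Fin.le_last z
      have hmin := nextF_spec_min h0 0 (hT _ _)
      have : nextF (⊤ : Setoid (Fin (n+1))) (Fin.last n) = 0 :=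
        le_antisymm hmin (Fin.zero_le _)
      rw [this, Fin.last_add_one]
    · -- x < last : next = x + 1
      have hx1 : (x : ℕ) + 1 < n + 1 := by
        have := Fin.lt_last_iff_ne_last.mp hlast
        omega
      have hxlt : x < x + 1 := by
        rw [Fin.lt_def, Fin.val_add_one_of_lt hlast]
        omega
      obtain ⟨h1, h2⟩ := nextF_spec_gt (z := x + 1) (hT x (x + 1)) hxlt
      refine le_antisymm h2 ?_
      -- x + 1 ≤ nextF : since x < nextF
      have hv : ((x + 1 : Fin (n+1)) : ℕ) = (x : ℕ) + 1 := Fin.val_add_one_of_lt hlast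
      have h1' : (x : ℕ) < ((nextF (⊤ : Setoid (Fin (n+1))) x) : ℕ) := h1
      omega

/-- the partition obtained from `π` by splitting the block of `a` along `[a, b)`. -/
def splitS (π : Setoid (Fin k)) (a b : Fin k) : Setoid (Fin k) :=
  ⟨fun x y => π x y ∧ (π x a → ((a ≤ x ∧ x < b) ↔ (a ≤ y ∧ y < b))), by
    refine ⟨fun x => ⟨π.refl x, fun _ => Iff.rfl⟩, ?_, ?_⟩
    · rintro x y ⟨h1, h2⟩
      exact ⟨π.symm h1, fun hya => (h2 (π.trans h1 hya)).symm⟩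
    · rintro x y z ⟨h1, h2⟩ ⟨h3, h4⟩
      exact ⟨π.trans h1 h3, fun hxa => (h2 hxa).trans (h4 (π.trans (π.symm h1) hxa))⟩⟩

lemma splitS_rel {π : Setoid (Fin k)} {a b x y : Fin k} :
    splitS π a b x y ↔ π x y ∧ (π x a → ((a ≤ x ∧ x < b) ↔ (a ≤ y ∧ y < b))) := Iff.rfl

lemma splitS_le (π : Setoid (Fin k)) (a b : Fin k) : splitS π a b ≤ π := by
  intro x y h; exact h.1

lemma sigma_split {π : Setoid (Fin k)} {a b : Fin k} (hab : a < b) (hrel : π a b) :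
    Equiv.swap a b * σof π = σof (splitS π a b) := by
  set π' := splitS π a b with hπ'
  ext x
  rw [Perm.mul_apply, σof_apply, σof_apply]
  by_cases hxa : π x a
  case neg =>
    -- block of x untouched
    have hcong : nextF π x = nextF π' x :=
      nextF_congr (fun y => ⟨fun h => ⟨h, fun h' => absurd h' hxa⟩, fun h => h.1⟩)
    have hna : nextF π x ≠ a := fun h => hxa (h ▸ nextF_rel π x)
    have hnb : nextF π x ≠ b :=
      fun h => hxa (π.trans (h ▸ nextF_rel π x) (π.symm hrel))
    rw [Equiv.swap_apply_of_ne_of_ne hna hnb, hcong]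
  case pos =>
    have hxb : π x b := π.trans hxa hrel
    by_cases hband : a ≤ x ∧ x < b
    · -- x in the part [a, b)
      obtain ⟨h1, h2⟩ := nextF_spec_gt hxb hband.2
      set y := nextF π x with hy
      rcases eq_or_lt_of_le h2 with hyb | hyb
      · -- y = b : swap gives a; next in π' is a
        rw [hyb, Equiv.swap_apply_right]
        have hnogt : ∀ z, π' x z → z ≤ x := by
          intro z hz
          by_contra hzx
          push_neg at hzx
          have hzb : z < b := by
            have := (hz.2 hxa).mp hband
            exact this.2
          have := nextF_le_of_gt hxb hband.2 hz.1 hzx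
          rw [← hy, hyb] at this
          exact absurd hzb (not_lt.mpr this)
        have hrelxa : π' x a :=
          ⟨hxa, fun _ => ⟨fun _ => ⟨le_refl a, hab⟩, fun _ => hband⟩⟩
        have hle := nextF_spec_min hnogt a hrelxa
        refine le_antisymm ?_ hle
        have := nextF_rel π' x
        exact ((this.2 hxa).mp hband).1
      · -- y < b : swap fixes y, next unchanged
        have hya : y ≠ a := fun h => absurd (h ▸ h1) (not_lt.mpr hband.1)
        have hynb : y ≠ b := ne_of_lt hyb
        rw [Equiv.swap_apply_of_ne_of_ne hya hynb]
        have hbandy : a ≤ y ∧ y < b := ⟨le_trans hband.1 (le_of_lt h1), hyb⟩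
        have hrely' : π' x y := ⟨nextF_rel π x, fun _ => ⟨fun _ => hbandy, fun _ => hband⟩⟩
        obtain ⟨hg1, _⟩ := nextF_spec_gt hrely' h1
        refine le_antisymm (nextF_le_of_gt hxb hband.2 (nextF_rel π' x).1 hg1) ?_
        exact nextF_le_of_gt hrely' h1 hrely' h1
    · -- x not in the part [a, b)
      by_cases hgt : ∃ z, π x z ∧ x < z
      · obtain ⟨z0, hz01, hz02⟩ := hgt
        obtain ⟨h1, h2⟩ := nextF_spec_gt hz01 hz02
        set y := nextF π x with hy
        have hymin : ∀ w, π x w → x < w → y ≤ w := fun w hw hxw =>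
          nextF_le_of_gt hz01 hz02 hw hxw
        by_cases hya : y = a
        · -- y = a : swap gives b ; next in π' is b
          rw [hya, Equiv.swap_apply_left]
          have hxlta : x < a := hya ▸ h1
          have hrelxb : π' x b :=
            ⟨hxb, fun _ => ⟨fun h => absurd h hband, fun h => absurd h.2 (lt_irrefl b)⟩⟩
          have hmin : ∀ z, π' x z → x < z → b ≤ z := by
            intro z hz hxz
            have hza : a ≤ z := hya ▸ hymin z hz.1 hxz
            have hzna : z ≠ a := by
              intro h
              subst h
              exact hband ((hz.2 hxa).mpr ⟨le_refl z, hab⟩)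
            have : ¬ (a ≤ z ∧ z < b) := fun h => hband ((hz.2 hxa).mpr h)
            push_neg at this
            exact this hza
          obtain ⟨hg1, _⟩ := nextF_spec_gt hrelxb (lt_trans hxlta hab)
          refine le_antisymm (hmin _ (nextF_rel π' x) hg1) ?_
          exact nextF_le_of_gt hrelxb (lt_trans hxlta hab) hrelxb (lt_trans hxlta hab)
        · -- y ≠ a, and y ≠ b, band y fails
          have hynb : y ≠ b := by
            intro h
            -- then x < a (since x < b and ¬band x), so a is a closer greater element
            have hxltb : x < b := h ▸ h1
            have hxlta : x < a := by
              rcases lt_or_ge x a with h' | h'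
              · exact h'
              · exact absurd ⟨h', hxltb⟩ hband
            have := hymin a hxa hxlta
            rw [h] at this
            exact absurd hab (not_lt.mpr this)
          have hbandy : ¬ (a ≤ y ∧ y < b) := by
            rintro ⟨hy1, hy2⟩
            have hay : a < y := lt_of_le_of_ne hy1 (fun h => hya h.symm)
            rcases lt_or_ge x a with h' | h'
            · exact absurd hay (not_lt.mpr (hymin a hxa h'))
            · have hxgeb : b ≤ x := by
                by_contra hc
                push_neg at hc
                exact hband ⟨h', hc⟩
              exact absurd (lt_of_le_of_lt hxgeb h1) (not_lt.mpr (le_of_lt hy2))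
          rw [Equiv.swap_apply_of_ne_of_ne hya hynb]
          have hrely' : π' x y :=
            ⟨nextF_rel π x, fun _ => ⟨fun h => absurd h hband, fun h => absurd h hbandy⟩⟩
          obtain ⟨hg1, _⟩ := nextF_spec_gt hrely' h1
          refine le_antisymm (hymin _ (nextF_rel π' x).1 hg1) ?_
          exact nextF_le_of_gt hrely' h1 hrely' h1
      · -- x is the max of its block
        push_neg at hgt
        have hnogt : ∀ z, π x z → z ≤ x := fun z hz => not_lt.mp (fun h => absurd h
          (by intro hh; exact absurd (lt_of_lt_of_le hh (le_refl z)) (not_lt.mpr (hgt z hz))))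
        have hymin : ∀ z, π x z → nextF π x ≤ z := nextF_spec_min hnogt
        set y := nextF π x with hy
        have hya' : y ≤ a := hymin a hxa
        have hnogt' : ∀ z, π' x z → z ≤ x := fun z hz => hnogt z hz.1
        have hymin' : ∀ z, π' x z → nextF π' x ≤ z := nextF_spec_min hnogt'
        by_cases hya : y = a
        · rw [hya, Equiv.swap_apply_left]
          have hrelxb : π' x b :=
            ⟨hxb, fun _ => ⟨fun h => absurd h hband, fun h => absurd h.2 (lt_irrefl b)⟩⟩
          refine le_antisymm ?_ (hymin' b hrelxb)
          -- min of π'-block is ≥ b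
          have hn' := nextF_rel π' x
          have hge_a : a ≤ nextF π' x := hya ▸ hymin _ hn'.1
          have hne_a : nextF π' x ≠ a := by
            intro h
            refine hband ((hn'.2 hxa).mpr ?_)
            rw [h]
            exact ⟨le_refl a, hab⟩
          have : ¬ (a ≤ nextF π' x ∧ nextF π' x < b) := fun h => hband ((hn'.2 hxa).mpr h)
          push_neg at this
          exact this hge_a
        · -- y < a : min unchanged
          have hylta : y < a := lt_of_le_of_ne hya' hya
          have hynb : y ≠ b := ne_of_lt (lt_trans hylta hab)
          rw [Equiv.swap_apply_of_ne_of_ne hya hynb]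
          have hbandy : ¬ (a ≤ y ∧ y < b) := fun h => absurd hylta (not_lt.mpr h.1)
          have hrely' : π' x y :=
            ⟨nextF_rel π x, fun _ => ⟨fun h => absurd h hband, fun h => absurd h hbandy⟩⟩
          exact le_antisymm (hymin _ (nextF_rel π' x).1) (hymin' y hrely')

lemma split_NC {π : Setoid (Fin k)} (hNC : NonCrossing π) (a b : Fin k) :
    NonCrossing (splitS π a b) := by
  rintro ⟨p, q, r, s, hpq, hqr, hrs, hpr, hqs, hnpq⟩
  by_cases hpq2 : π p q
  · have hstruct : π p a ∧ ¬ ((a ≤ p ∧ p < b) ↔ (a ≤ q ∧ q < b)) := by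
      by_contra hc
      push_neg at hc
      refine hnpq ⟨hpq2, fun hpa => ?_⟩
      by_contra hiff
      exact absurd (hc hpa).symm (by tauto)
    obtain ⟨hpa, hniff⟩ := hstruct
    have hiffpr : (a ≤ p ∧ p < b) ↔ (a ≤ r ∧ r < b) := hpr.2 hpa
    have hqa : π q a := π.trans (π.symm hpq2) hpa
    have hiffqs : (a ≤ q ∧ q < b) ↔ (a ≤ s ∧ s < b) := hqs.2 hqa
    by_cases hbp : a ≤ p ∧ p < b
    · have hbr := hiffpr.mp hbp
      have hbq : ¬ (a ≤ q ∧ q < b) := fun h => hniff ⟨fun _ => h, fun _ => hbp⟩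
      exact hbq ⟨le_trans hbp.1 (le_of_lt hpq), lt_trans hqr hbr.2⟩
    · have hbq : a ≤ q ∧ q < b := by
        by_contra hc
        exact hniff ⟨fun h => absurd h hbp, fun h => absurd h hc⟩
      have hbs := hiffqs.mp hbq
      have hbr : a ≤ r ∧ r < b := ⟨le_trans hbq.1 (le_of_lt hqr), lt_trans hrs hbs.2⟩
      exact hbp (hiffpr.mpr hbr)
  · exact hNC ⟨p, q, r, s, hpq, hqr, hrs, hpr.1, hqs.1, hpq2⟩

lemma cN_le (σ : Perm (Fin k)) : cN σ ≤ k := by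
  have := nc_le_card (cycleSetoid σ)
  rwa [Fintype.card_fin] at this

lemma exists_moved {τ : Perm (Fin k)} (hτ : τ ≠ 1) : ∃ a, τ a ≠ a := by
  by_contra hc
  push_neg at hc
  exact hτ (by ext x; simp [hc x])

lemma cN_mul_swap_cases (σ : Perm (Fin k)) {a b : Fin k} (hab : a ≠ b) :
    cN (σ * Equiv.swap a b) = cN σ + 1 ∨ cN (σ * Equiv.swap a b) + 1 = cN σ := by
  by_cases h : σ.SameCycle a b
  · exact Or.inl (cN_split hab h).symm
  · exact Or.inr (cN_merge hab h)

lemma triangle (σ τ : Perm (Fin k)) : cN σ + cN τ ≤ k + cN (σ * τ) := by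
  have main : ∀ n : ℕ, ∀ σ τ : Perm (Fin k), k - cN τ = n →
      cN σ + cN τ ≤ k + cN (σ * τ) := by
    intro n
    induction n using Nat.strong_induction_on with
    | _ n ih =>
      intro σ τ hn
      by_cases hτ : τ = 1
      · subst hτ
        rw [cN_one, mul_one]
        omega
      · obtain ⟨a, ha⟩ := exists_moved hτ
        have hab : a ≠ τ a := Ne.symm ha
        have hsc : τ.SameCycle a (τ a) := ⟨1, by simp⟩
        have h1 : cN τ + 1 = cN (τ * Equiv.swap a (τ a)) := cN_split hab hsc
        set τ' := τ * Equiv.swap a (τ a) with hτ'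
        have hcτ : cN τ < k := by
          rcases lt_or_ge (cN τ) k with h | h
          · exact h
          · exact absurd (eq_one_of_cN h) hτ
        have hmeas : k - cN τ' < n := by omega
        have ihh := ih _ hmeas σ τ' rfl
        have hστ : σ * τ = (σ * τ') * Equiv.swap a (τ a) := by
          rw [hτ', ← mul_assoc, mul_assoc, mul_assoc, Equiv.swap_mul_self, mul_one]
        have h2 : cN (σ * τ') ≤ cN (σ * τ) + 1 := by
          rcases cN_mul_swap_cases (σ * τ') hab with h | h <;> rw [← hστ] at h <;> omega
        omega
  exact main _ σ τ rfl

lemma nonCrossing_top : NonCrossing (⊤ : Setoid (Fin k)) := by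
  rintro ⟨a, b, c, d, _, _, _, _, _, hn⟩
  exact hn trivial

lemma cN_finRotate (hk : 0 < k) : cN (finRotate k) = 1 := by
  have : Nonempty (Fin k) := ⟨⟨0, hk⟩⟩
  rw [cN, ← σof_top_eq_finRotate, cyc_σof]
  exact nc_top

lemma cyc_conj_swap (τ : Perm (Fin k)) (a b : Fin k) :
    Equiv.swap a b * τ = τ * Equiv.swap (τ⁻¹ a) (τ⁻¹ b) := by
  have := Equiv.swap_apply_apply τ (τ⁻¹ a) (τ⁻¹ b)
  rw [Perm.apply_inv_self, Perm.apply_inv_self] at this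
  rw [this, mul_assoc, mul_assoc, inv_mul_cancel, mul_one]

theorem geodesic_struct (hk : 0 < k) :
    ∀ n : ℕ, ∀ σ : Perm (Fin k), k - cN (σ⁻¹ * finRotate k) = n →
    cN σ + cN (σ⁻¹ * finRotate k) = k + 1 →
    NonCrossing (cycleSetoid σ) ∧ σ = σof (cycleSetoid σ) := by
  intro n
  induction n using Nat.strong_induction_on with
  | _ n ih =>
    intro σ hn hgeo
    set ρ := finRotate k with hρ
    set τ := σ⁻¹ * ρ with hτdef
    by_cases hτ : τ = 1
    · rw [hτdef] at hτ
      have hσρ : σ = ρ := inv_mul_eq_one.mp hτ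
      have hcyc : cycleSetoid σ = ⊤ := by
        rw [hσρ, hρ, ← σof_top_eq_finRotate, cyc_σof]
      rw [hcyc, hσρ, hρ, ← σof_top_eq_finRotate]
      exact ⟨nonCrossing_top, rfl⟩
    · obtain ⟨a, ha⟩ := exists_moved hτ
      set b := τ a with hb
      have hab : a ≠ b := Ne.symm ha
      have hsc : τ.SameCycle a b := ⟨1, by simp [hb]⟩
      have hne' : τ⁻¹ a ≠ τ⁻¹ b := fun h => hab (τ⁻¹.injective h)
      have hsc' : τ.SameCycle (τ⁻¹ a) (τ⁻¹ b) := by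
        refine Perm.SameCycle.trans (Perm.SameCycle.trans ⟨1, by simp⟩ hsc) ⟨-1, by simp⟩
      have h1 : cN τ + 1 = cN (Equiv.swap a b * τ) := by
        rw [cyc_conj_swap τ a b]
        exact cN_split hne' hsc'
      set σt := σ * Equiv.swap a b with hσt
      have hσtinv : σt⁻¹ * ρ = Equiv.swap a b * τ := by
        rw [hσt, mul_inv_rev, Equiv.swap_inv, hτdef, mul_assoc]
      have hcρ : cN ρ = 1 := cN_finRotate hk
      have htri : cN σt + cN (σt⁻¹ * ρ) ≤ k + 1 := by
        have := triangle σt (σt⁻¹ * ρ)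
        rw [← mul_assoc, mul_inv_cancel, one_mul, hcρ] at this
        exact this
      have hT1 : cN σt = cN σ + 1 ∨ cN σt + 1 = cN σ := by
        have := cN_mul_swap_cases σ hab
        rwa [← hσt] at this
      have hcτle : cN τ < k := by
        have h2 := cN_le (σt⁻¹ * ρ)
        rw [hσtinv, ← h1] at h2
        omega
      have hcσt : cN σt + 1 = cN σ := by
        rw [hσtinv, ← h1] at htri
        omega
      have hgeo' : cN σt + cN (σt⁻¹ * ρ) = k + 1 := by
        rw [hσtinv, ← h1]
        omega
      have hmeas : k - cN (σt⁻¹ * ρ) < n := by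
        rw [hσtinv, ← h1]
        omega
      obtain ⟨hNC, hform⟩ := ih _ hmeas σt rfl hgeo'
      set πt := cycleSetoid σt with hπt
      -- a and b are in the same cycle of σt
      have hsc2 : σt.SameCycle a b := by
        by_contra hns
        have := cN_merge hab hns
        rw [hσt, mul_assoc, Equiv.swap_mul_self, mul_one, ← hσt] at this
        omega
      -- pass to u = σt a, v = σt b
      set u := σt a with hu
      set v := σt b with hv
      have huv : u ≠ v := fun h => hab (σt.injective h)
      have hreluv : πt u v := by
        have h1' : πt u a := (cyc_rel_apply σt a).symm
        have h2' : πt b v := cyc_rel_apply σt b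
        exact Setoid.trans' _ (Setoid.trans' _ h1' hsc2) h2'
      have hswap : σ = Equiv.swap u v * σt := by
        have := Equiv.swap_apply_apply σt a b
        rw [← hu, ← hv] at this
        rw [this, mul_assoc, inv_mul_cancel, mul_one]
        rw [hσt, mul_assoc, Equiv.swap_mul_self, mul_one]
      rcases lt_or_gt_of_ne huv with hlt | hlt
      · have hkey : σ = σof (splitS πt u v) := by
          rw [hswap, hform, sigma_split hlt hreluv]
        have hcycσ : cycleSetoid σ = splitS πt u v := by rw [hkey, cyc_σof]
        refine ⟨?_, ?_⟩
        · rw [hcycσ]; exact split_NC hNC u v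
        · rw [hcycσ, ← hkey]
      · have hkey : σ = σof (splitS πt v u) := by
          rw [hswap, Equiv.swap_comm, hform, sigma_split hlt (Setoid.symm' _ hreluv)]
        have hcycσ : cycleSetoid σ = splitS πt v u := by rw [hkey, cyc_σof]
        refine ⟨?_, ?_⟩
        · rw [hcycσ]; exact split_NC hNC v u
        · rw [hcycσ, ← hkey]

lemma sup_pair_class {π : Setoid (Fin k)} {c0 z x u : Fin k}
    (hu : π c0 u ∨ π z u) (hx : π c0 x ∨ π z x) : (π ⊔ pairS c0 z) x u := by
  rw [sup_pairS_rel]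
  rcases hx with hx | hx <;> rcases hu with hu | hu
  · exact Or.inl (π.trans (π.symm hx) hu)
  · exact Or.inr (Or.inl ⟨π.symm hx, hu⟩)
  · exact Or.inr (Or.inr ⟨π.symm hx, hu⟩)
  · exact Or.inl (π.trans (π.symm hx) hu)

lemma split_merge_eq {π : Setoid (Fin k)} {c0 z u v d : Fin k} (hcz : ¬ π c0 z)
    (hd : d = c0 ∨ d = z)
    (hclaim : ∀ x, π c0 x ∨ π z x → ((u ≤ x ∧ x < v) ↔ π d x))
    (hu : π c0 u ∨ π z u) :
    π = splitS (π ⊔ pairS c0 z) u v := by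
  set π₁ := π ⊔ pairS c0 z with hπ₁
  have hM : ∀ x y, π₁ x y ↔ π x y ∨ (π x c0 ∧ π z y) ∨ (π x z ∧ π c0 y) :=
    fun x y => sup_pairS_rel π c0 z x y
  have hMem : ∀ x, π₁ x u → (π c0 x ∨ π z x) := by
    intro x hx
    rcases (hM x u).mp hx with h | ⟨h1, _⟩ | ⟨h1, _⟩
    · rcases hu with hu | hu
      · exact Or.inl (π.trans hu (π.symm h))
      · exact Or.inr (π.trans hu (π.symm h))
    · exact Or.inl (π.symm h1)
    · exact Or.inr (π.symm h1)
  refine Setoid.ext (fun x y => ?_)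
  constructor
  · intro hxy
    refine ⟨(le_sup_left : π ≤ π₁) hxy, fun hxu => ?_⟩
    have hxM := hMem x hxu
    have hyM : π c0 y ∨ π z y := by
      rcases hxM with h | h
      · exact Or.inl (π.trans h hxy)
      · exact Or.inr (π.trans h hxy)
    rw [hclaim x hxM, hclaim y hyM]
    constructor
    · intro h; exact π.trans h hxy
    · intro h; exact π.trans h (π.symm hxy)
  · rintro ⟨h1, h2⟩
    rcases (hM x y).mp h1 with h | ⟨ha1, ha2⟩ | ⟨ha1, ha2⟩
    · exact h
    · -- x in block of c0, y in block of z : impossible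
      exfalso
      have hxM : π c0 x ∨ π z x := Or.inl (π.symm ha1)
      have hyM : π c0 y ∨ π z y := Or.inr ha2
      have hxu : π₁ x u := sup_pair_class hu hxM
      have hiff := h2 hxu
      rw [hclaim x hxM, hclaim y hyM] at hiff
      rcases hd with rfl | rfl
      · have hdx : π d x := π.symm ha1
        have hdy : ¬ π d y := fun h' => hcz (π.trans h' (π.symm ha2))
        exact hdy (hiff.mp hdx)
      · have hdy : π d y := ha2
        have hdx : ¬ π d x := fun h' => hcz (π.symm (π.trans h' ha1))
        exact hdx (hiff.mpr hdy)
    · exfalso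
      have hxM : π c0 x ∨ π z x := Or.inr (π.symm ha1)
      have hyM : π c0 y ∨ π z y := Or.inl ha2
      have hxu : π₁ x u := sup_pair_class hu hxM
      have hiff := h2 hxu
      rw [hclaim x hxM, hclaim y hyM] at hiff
      rcases hd with rfl | rfl
      · have hdy : π d y := ha2
        have hdx : ¬ π d x := fun h' => hcz (π.trans h' ha1)
        exact hdx (hiff.mpr hdy)
      · have hdx : π d x := π.symm ha1
        have hdy : ¬ π d y := fun h' => hcz (π.symm (π.trans h' (π.symm ha2)))
        exact hdy (hiff.mp hdx)

lemma exists_merge {π ρ : Setoid (Fin k)} (hπ : NonCrossing π) (hρ : NonCrossing ρ)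
    (hle : π ≤ ρ) (hne : π ≠ ρ) :
    ∃ (π₁ : Setoid (Fin k)) (u v : Fin k), u ≠ v ∧ NonCrossing π₁ ∧ π₁ ≤ ρ ∧
      nc π₁ + 1 = nc π ∧ σof π = Equiv.swap u v * σof π₁ := by
  -- find a ρ-class containing two π-classes
  have hnle : ¬ ∀ x y, ρ x y → π x y := by
    intro h
    exact hne (le_antisymm hle (fun {x y} hxy => h x y hxy))
  push_neg at hnle
  obtain ⟨x0, y0, hρ0, hπ0⟩ := hnle
  -- c0 : the minimum of the ρ-class
  have hx0mem : x0 ∈ blockF ρ x0 := mem_blockF.mpr (ρ.refl x0)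
  set c0 := (blockF ρ x0).min' ⟨x0, hx0mem⟩ with hc0
  have hc0mem : ρ x0 c0 := mem_blockF.mp ((blockF ρ x0).min'_mem _)
  have hc0min : ∀ w, ρ x0 w → c0 ≤ w := fun w hw => Finset.min'_le _ _ (mem_blockF.mpr hw)
  -- z : the minimum of the ρ-class minus the π-class of c0
  have hDne : ((blockF ρ x0).filter (fun t => ¬ π c0 t)).Nonempty := by
    by_cases hx : π c0 x0
    · refine ⟨y0, Finset.mem_filter.mpr ⟨mem_blockF.mpr hρ0, fun hy => ?_⟩⟩
      exact hπ0 (π.trans (π.symm hx) hy)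
    · exact ⟨x0, Finset.mem_filter.mpr ⟨hx0mem, hx⟩⟩
  set z := ((blockF ρ x0).filter (fun t => ¬ π c0 t)).min' hDne with hz
  have hzmem' := Finset.mem_filter.mp (((blockF ρ x0).filter (fun t => ¬ π c0 t)).min'_mem hDne)
  have hzρ : ρ x0 z := mem_blockF.mp hzmem'.1
  have hcz : ¬ π c0 z := hzmem'.2
  have hzmin : ∀ w, ρ x0 w → ¬ π c0 w → z ≤ w := fun w h1 h2 =>
    Finset.min'_le _ _ (Finset.mem_filter.mpr ⟨mem_blockF.mpr h1, h2⟩)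
  have hc0z : c0 < z := lt_of_le_of_ne (hc0min z hzρ) (fun h => hcz (h ▸ π.refl c0))
  -- facts about the two blocks
  have hB1ρ : ∀ t, π c0 t → ρ x0 t := fun t ht => ρ.trans hc0mem (hle ht)
  have hB2ρ : ∀ t, π z t → ρ x0 t := fun t ht => ρ.trans hzρ (hle ht)
  have hzminB2 : ∀ t, π z t → z ≤ t := by
    intro t ht
    refine hzmin t (hB2ρ t ht) (fun hc => hcz (π.trans hc (π.symm ht)))
  -- w : max of block of z
  have hzself : z ∈ blockF π z := mem_blockF.mpr (π.refl z)
  set w := (blockF π z).max' ⟨z, hzself⟩ with hw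
  have hwmem : π z w := mem_blockF.mp ((blockF π z).max'_mem _)
  have hwmax : ∀ t, π z t → t ≤ w := fun t ht => Finset.le_max' _ _ (mem_blockF.mpr ht)
  have hzw : z ≤ w := hzminB2 w hwmem
  -- no element of block of c0 in (z, w]
  have hgap : ∀ t, π c0 t → ¬ (z < t ∧ t ≤ w) := by
    rintro t ht ⟨h1, h2⟩
    have htw : t ≠ w := fun h => hcz (π.trans ht (π.symm (h ▸ hwmem)))
    have h2' : t < w := lt_of_le_of_ne h2 htw
    exact hπ ⟨c0, z, t, w, hc0z, h1, h2', ht, hwmem, hcz⟩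
  set π₁ := π ⊔ pairS c0 z with hπ₁
  have hπ₁le : π₁ ≤ ρ := by
    refine sup_le hle ?_
    rintro x y (rfl | ⟨rfl, rfl⟩ | ⟨rfl, rfl⟩)
    · exact ρ.refl x
    · exact ρ.trans (ρ.symm hc0mem) hzρ
    · exact ρ.trans (ρ.symm hzρ) hc0mem
  have hnc : nc π₁ + 1 = nc π := nc_sup_pairS π hcz
  -- non-crossing of the merged partition
  have hM : ∀ x y, π₁ x y ↔ π x y ∨ (π x c0 ∧ π z y) ∨ (π x z ∧ π c0 y) :=
    fun x y => sup_pairS_rel π c0 z x y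
  have hinM : ∀ p q, (π c0 p ∨ π z p) → (π c0 q ∨ π z q) → π₁ p q := by
    intro p q hp hq
    exact Setoid.trans' _ (Setoid.symm' _ (sup_pair_class hp hp)) (sup_pair_class hq hp)
  have hNC1 : NonCrossing π₁ := by
    rintro ⟨p, q, r, s, hpq, hqr, hrs, hpr, hqs, hnpq⟩
    have hnM : ¬ ((π c0 p ∨ π z p) ∧ (π c0 q ∨ π z q)) := by
      rintro ⟨hp, hq⟩
      exact hnpq (hinM p q hp hq)
    have hnπpq : ¬ π p q := fun h => hnpq ((le_sup_left : π ≤ π₁) h)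
    rcases (hM p r).mp hpr with hpr' | ⟨hp1, hp2⟩ | ⟨hp1, hp2⟩ <;>
      rcases (hM q s).mp hqs with hqs' | ⟨hq1, hq2⟩ | ⟨hq1, hq2⟩
    -- case 1 : plain π crossing
    · exact hπ ⟨p, q, r, s, hpq, hqr, hrs, hpr', hqs', hnπpq⟩
    -- case 2 : π p r, q ∈ B1, s ∈ B2
    · have hpM : ¬ (π c0 p ∨ π z p) := by
        intro hp
        exact hnM ⟨hp, Or.inl (π.symm hq1)⟩
      by_cases hρp : ρ x0 p
      · -- c0 < p < q < r crossing in π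
        have hc0p : c0 < p := lt_of_le_of_ne (hc0min p hρp)
          (fun h => hpM (Or.inl (h ▸ π.refl c0)))
        exact hπ ⟨c0, p, q, r, hc0p, hpq, hqr, π.symm hq1, hpr',
          fun h => hpM (Or.inl h)⟩
      · -- ρ-crossing
        refine hρ ⟨p, q, r, s, hpq, hqr, hrs, hle hpr', ?_, ?_⟩
        · exact ρ.trans (ρ.symm (hB1ρ q (π.symm hq1))) (hB2ρ s hq2)
        · intro h
          exact hρp (ρ.trans (hB1ρ q (π.symm hq1)) (ρ.symm h))
    -- case 3 : π p r, q ∈ B2, s ∈ B1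
    · have hpM : ¬ (π c0 p ∨ π z p) := by
        intro hp
        exact hnM ⟨hp, Or.inr (π.symm hq1)⟩
      by_cases hρp : ρ x0 p
      · have hzp : z < p := by
          refine lt_of_le_of_ne (hzmin p hρp (fun h => hpM (Or.inl h)))
            (fun h => hpM (Or.inr (h ▸ π.refl z)))
        exact hπ ⟨z, p, q, r, hzp, hpq, hqr, π.symm hq1, hpr',
          fun h => hpM (Or.inr h)⟩
      · refine hρ ⟨p, q, r, s, hpq, hqr, hrs, hle hpr', ?_, ?_⟩
        · exact ρ.trans (ρ.symm (hB2ρ q (π.symm hq1))) (hB1ρ s hq2)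
        · intro h
          exact hρp (ρ.trans (hB2ρ q (π.symm hq1)) (ρ.symm h))
    -- case 4 : p ∈ B1, r ∈ B2, π q s
    · have hqM : ¬ (π c0 q ∨ π z q) := by
        intro hq
        exact hnM ⟨Or.inl (π.symm hp1), hq⟩
      by_cases hρq : ρ x0 q
      · have hzq : z < q := by
          refine lt_of_le_of_ne (hzmin q hρq (fun h => hqM (Or.inl h)))
            (fun h => hqM (Or.inr (h ▸ π.refl z)))
        exact hπ ⟨z, q, r, s, hzq, hqr, hrs, hp2, hqs',
          fun h => hqM (Or.inr h)⟩
      · refine hρ ⟨p, q, r, s, hpq, hqr, hrs, ?_, hle hqs', ?_⟩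
        · exact ρ.trans (ρ.symm (hB1ρ p (π.symm hp1))) (hB2ρ r hp2)
        · intro h
          exact hρq (ρ.trans (hB1ρ p (π.symm hp1)) h)
    -- case 5 : both mixed (p ∈ B1, q ∈ B1)
    · exact hnM ⟨Or.inl (π.symm hp1), Or.inl (π.symm hq1)⟩
    · exact hnM ⟨Or.inl (π.symm hp1), Or.inr (π.symm hq1)⟩
    -- case 7 : p ∈ B2, r ∈ B1, π q s
    · have hqM : ¬ (π c0 q ∨ π z q) := by
        intro hq
        exact hnM ⟨Or.inr (π.symm hp1), hq⟩
      by_cases hρq : ρ x0 q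
      · have hc0q : c0 < q := lt_of_le_of_ne (hc0min q hρq)
          (fun h => hqM (Or.inl (h ▸ π.refl c0)))
        exact hπ ⟨c0, q, r, s, hc0q, hqr, hrs, hp2, hqs',
          fun h => hqM (Or.inl h)⟩
      · refine hρ ⟨p, q, r, s, hpq, hqr, hrs, ?_, hle hqs', ?_⟩
        · exact ρ.trans (ρ.symm (hB2ρ p (π.symm hp1))) (hB1ρ r hp2)
        · intro h
          exact hρq (ρ.trans (hB2ρ p (π.symm hp1)) h)
    · exact hnM ⟨Or.inr (π.symm hp1), Or.inl (π.symm hq1)⟩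
    · exact hnM ⟨Or.inr (π.symm hp1), Or.inr (π.symm hq1)⟩
  -- construct the split pair (u, v)
  by_cases hA : ∃ t, π c0 t ∧ w < t
  · -- case A : u = z, v = min of {t ∈ B1 : w < t}
    have hAne : ((blockF π c0).filter (fun t => w < t)).Nonempty := by
      obtain ⟨t, ht1, ht2⟩ := hA
      exact ⟨t, Finset.mem_filter.mpr ⟨mem_blockF.mpr ht1, ht2⟩⟩
    set v := ((blockF π c0).filter (fun t => w < t)).min' hAne with hv
    have hvmem' := Finset.mem_filter.mp
      (((blockF π c0).filter (fun t => w < t)).min'_mem hAne)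
    have hvB1 : π c0 v := mem_blockF.mp hvmem'.1
    have hvgt : w < v := hvmem'.2
    have hvmin : ∀ t, π c0 t → w < t → v ≤ t := fun t h1 h2 =>
      Finset.min'_le _ _ (Finset.mem_filter.mpr ⟨mem_blockF.mpr h1, h2⟩)
    have hclaim : ∀ x, π c0 x ∨ π z x → ((z ≤ x ∧ x < v) ↔ π z x) := by
      intro x hx
      constructor
      · rintro ⟨h1, h2⟩
        rcases hx with hx | hx
        · -- x ∈ B1 with z ≤ x < v : contradiction
          exfalso
          have hxz : x ≠ z := fun h => hcz (h ▸ hx)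
          have h1' : z < x := lt_of_le_of_ne h1 (Ne.symm hxz)
          by_cases hxw : x ≤ w
          · exact hgap x hx ⟨h1', hxw⟩
          · push_neg at hxw
            exact absurd (hvmin x hx hxw) (not_le.mpr h2)
        · exact hx
      · intro hx'
        exact ⟨hzminB2 x hx', lt_of_le_of_lt (hwmax x hx') hvgt⟩
    have huvlt : z < v := lt_of_le_of_lt hzw hvgt
    have huvne : z ≠ v := ne_of_lt huvlt
    have hrel1 : π₁ z v :=
      (sup_pairS_rel π c0 z z v).mpr (Or.inr (Or.inr ⟨π.refl z, hvB1⟩))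
    have heq : π = splitS π₁ z v :=
      split_merge_eq hcz (Or.inr rfl) hclaim (Or.inr (π.refl z))
    refine ⟨π₁, z, v, huvne, hNC1, hπ₁le, hnc, ?_⟩
    rw [heq, ← sigma_split huvlt hrel1]
  · -- case B : u = c0, v = z
    push_neg at hA
    have hclaim : ∀ x, π c0 x ∨ π z x → ((c0 ≤ x ∧ x < z) ↔ π c0 x) := by
      intro x hx
      constructor
      · rintro ⟨h1, h2⟩
        rcases hx with hx | hx
        · exact hx
        · exact absurd (hzminB2 x hx) (not_le.mpr h2)
      · intro hx'
        refine ⟨hc0min x (hB1ρ x hx'), ?_⟩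
        have hxw : x ≤ w := hA x hx'
        have hxz : x ≠ z := fun h => hcz (h ▸ hx')
        rcases lt_or_ge x z with h | h
        · exact h
        · exact absurd (hgap x hx' ⟨lt_of_le_of_ne h (Ne.symm hxz), hxw⟩) not_false
    have hrel1 : π₁ c0 z :=
      (sup_pairS_rel π c0 z c0 z).mpr (Or.inr (Or.inl ⟨π.refl c0, π.refl z⟩))
    have heq : π = splitS π₁ c0 z :=
      split_merge_eq hcz (Or.inl rfl) hclaim (Or.inl (π.refl c0))
    refine ⟨π₁, c0, z, ne_of_lt hc0z, hNC1, hπ₁le, hnc, ?_⟩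
    rw [heq, ← sigma_split hc0z hrel1]

lemma cN_σof (π : Setoid (Fin k)) : cN (σof π) = nc π := by rw [cN, cyc_σof]

lemma cN_chain {π ρ : Setoid (Fin k)} (hπ : NonCrossing π) (hρ : NonCrossing ρ)
    (hle : π ≤ ρ) : cN ((σof π)⁻¹ * σof ρ) + nc π = k + nc ρ := by
  have htri : cN ((σof π)⁻¹ * σof ρ) + nc π ≤ k + nc ρ := by
    have := triangle (σof π) ((σof π)⁻¹ * σof ρ)
    rw [← mul_assoc, mul_inv_cancel, one_mul, cN_σof, cN_σof] at this
    omega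
  have main : ∀ n : ℕ, ∀ π : Setoid (Fin k), NonCrossing π → π ≤ ρ →
      nc π = nc ρ + n → k + nc ρ ≤ cN ((σof π)⁻¹ * σof ρ) + nc π := by
    intro n
    induction n using Nat.strong_induction_on with
    | _ n ih =>
      intro π hπ' hle' hn
      by_cases heq : π = ρ
      · subst heq
        rw [inv_mul_cancel, cN_one]
      · rcases Nat.eq_zero_or_pos n with rfl | hnpos
        · exact absurd (eq_of_le_of_nc_le hle' (le_of_eq hn)) heq
        · obtain ⟨π₁, u, v, huv, hNC1, hle1, hnc1, hσeq⟩ := exists_merge hπ' hρ hle' heq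
          set g := σof π₁ with hg
          have hw : (σof π)⁻¹ * σof ρ =
              Equiv.swap (g⁻¹ u) (g⁻¹ v) * (g⁻¹ * σof ρ) := by
            have hsw := Equiv.swap_apply_apply g⁻¹ u v
            rw [hσeq, hsw, mul_inv_rev, Equiv.swap_inv, inv_inv]
            group
          have hne' : g⁻¹ u ≠ g⁻¹ v := fun h => huv (g⁻¹.injective h)
          have hconj := cyc_conj_swap (g⁻¹ * σof ρ) (g⁻¹ u) (g⁻¹ v)
          have hne'' : (g⁻¹ * σof ρ)⁻¹ (g⁻¹ u) ≠ (g⁻¹ * σof ρ)⁻¹ (g⁻¹ v) :=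
            fun h => hne' ((g⁻¹ * σof ρ)⁻¹.injective h)
          have hcases := cN_mul_swap_cases (g⁻¹ * σof ρ) hne''
          have hstep : cN ((σof π)⁻¹ * σof ρ) + 1 ≥ cN (g⁻¹ * σof ρ) := by
            rw [hw, hconj]
            omega
          have hIH := ih (n - 1) (by omega) π₁ hNC1 hle1 (by omega)
          rw [← hg] at hIH
          omega
  have := main (nc π - nc ρ) π hπ hle (by have := nc_mono hle; omega)
  omega

lemma cyc_le_of_geo {τ : Perm (Fin k)} :
    ∀ n : ℕ, ∀ σ : Perm (Fin k), k - cN (σ⁻¹ * τ) = n →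
    cN σ + cN (σ⁻¹ * τ) = k + cN τ → cycleSetoid σ ≤ cycleSetoid τ := by
  intro n
  induction n using Nat.strong_induction_on with
  | _ n ih =>
    intro σ hn hgeo
    set u := σ⁻¹ * τ with hudef
    by_cases hu : u = 1
    · rw [hudef] at hu
      rw [inv_mul_eq_one.mp hu]
    · obtain ⟨a, ha⟩ := exists_moved hu
      set b := u a with hb
      have hab : a ≠ b := Ne.symm ha
      have hconj := cyc_conj_swap u a b
      have hinvb : u⁻¹ b = a := by rw [hb, Perm.inv_apply_self]
      have hne' : u⁻¹ a ≠ u⁻¹ b := fun h => hab (u⁻¹.injective h)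
      have hsc' : u.SameCycle (u⁻¹ a) (u⁻¹ b) := by
        rw [hinvb]
        exact ⟨1, by simp⟩
      have h1 : cN u + 1 = cN (Equiv.swap a b * u) := by
        rw [hconj]
        exact cN_split hne' hsc'
      set σ' := σ * Equiv.swap a b with hσ'
      have hσ'inv : σ'⁻¹ * τ = Equiv.swap a b * u := by
        rw [hσ', mul_inv_rev, Equiv.swap_inv, hudef, mul_assoc]
      have htri : cN σ' + cN (σ'⁻¹ * τ) ≤ k + cN τ := by
        have := triangle σ' (σ'⁻¹ * τ)
        rw [← mul_assoc, mul_inv_cancel, one_mul] at this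
        exact this
      have hT1 : cN σ' = cN σ + 1 ∨ cN σ' + 1 = cN σ := by
        have := cN_mul_swap_cases σ hab
        rwa [← hσ'] at this
      have hcσ' : cN σ' + 1 = cN σ := by
        rw [hσ'inv, ← h1] at htri
        omega
      have hns : ¬ σ.SameCycle a b := by
        intro hsc
        have := cN_split hab hsc
        rw [← hσ'] at this
        omega
      have hmerge := cyc_merge hab hns
      rw [← hσ'] at hmerge
      have hcle : cN u < k := by
        have := cN_le (σ'⁻¹ * τ)
        rw [hσ'inv, ← h1] at this
        omega
      have hmeas : k - cN (σ'⁻¹ * τ) < n := by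
        rw [hσ'inv, ← h1]
        omega
      have hgeo' : cN σ' + cN (σ'⁻¹ * τ) = k + cN τ := by
        rw [hσ'inv, ← h1]
        omega
      have hIH := ih _ hmeas σ' rfl hgeo'
      calc cycleSetoid σ ≤ cycleSetoid σ' := by
            rw [hmerge]; exact le_sup_left
        _ ≤ cycleSetoid τ := hIH

lemma cyc_inv (σ : Perm (Fin k)) : cycleSetoid σ⁻¹ = cycleSetoid σ :=
  Setoid.ext (fun x y => Perm.sameCycle_inv)

lemma cN_inv (σ : Perm (Fin k)) : cN σ⁻¹ = cN σ := by unfold cN; rw [cyc_inv]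

lemma permPartition_rel {σ : Perm (Fin k)} {x y : Fin k ⊕ Fin k} :
    permPartition σ x y ↔ Sum.elim id ⇑σ.symm x = Sum.elim id ⇑σ.symm y := Iff.rfl

lemma idk_eq : idk k = permPartition (1 : Perm (Fin k)) := by
  refine Setoid.ext (fun x y => ?_)
  show Sum.elim id id x = Sum.elim id id y ↔ _
  rw [permPartition_rel]
  cases x <;> cases y <;> simp [Equiv.Perm.one_symm]

/-- the join of two permutation partitions via cycles of `τ⁻¹σ`. -/
lemma permPartition_sup (σ τ : Perm (Fin k)) :
    permPartition σ ⊔ permPartition τ =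
      Setoid.ker (fun x => Quotient.mk (cycleSetoid (τ⁻¹ * σ)) (Sum.elim id ⇑σ.symm x)) := by
  set c := τ⁻¹ * σ with hc
  set g := fun x => Quotient.mk (cycleSetoid c) (Sum.elim id ⇑σ.symm x) with hg
  have hp : permPartition σ ≤ Setoid.ker g := by
    intro x y h
    show Quotient.mk (cycleSetoid c) (Sum.elim id ⇑σ.symm x)
      = Quotient.mk (cycleSetoid c) (Sum.elim id ⇑σ.symm y)
    exact congrArg _ (permPartition_rel.mp h)
  have hq : permPartition τ ≤ Setoid.ker g := by
    intro x y h
    rw [permPartition_rel] at h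
    show g x = g y
    have key : ∀ j : Fin k, (Quotient.mk (cycleSetoid c) (τ.symm j) : Quotient (cycleSetoid c))
        = Quotient.mk (cycleSetoid c) (σ.symm j) := by
      intro j
      refine Quotient.sound ?_
      show c.SameCycle (τ.symm j) (σ.symm j)
      refine Perm.SameCycle.symm ⟨1, ?_⟩
      simp [hc, Perm.mul_apply, ← Equiv.Perm.inv_def]
    cases x with
    | inl i => cases y with
      | inl j => simp only [Sum.elim_inl, id] at h; rw [h]
      | inr j =>
        simp only [Sum.elim_inl, Sum.elim_inr, id] at h
        show Quotient.mk _ i = Quotient.mk _ (σ.symm j)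
        rw [h]
        exact key j
    | inr i => cases y with
      | inl j =>
        simp only [Sum.elim_inl, Sum.elim_inr, id] at h
        show Quotient.mk _ (σ.symm i) = Quotient.mk _ j
        rw [← h]
        exact (key i).symm
      | inr j =>
        simp only [Sum.elim_inr] at h
        show Quotient.mk _ (σ.symm i) = Quotient.mk _ (σ.symm j)
        have : i = j := τ.symm.injective h
        rw [this]
  refine le_antisymm (sup_le hp hq) ?_
  intro x y h
  have hs : ∀ i : Fin k, (permPartition σ ⊔ permPartition τ) (Sum.inl i) (Sum.inl (c i)) := by
    intro i
    have h1 : (permPartition σ) (Sum.inl i) (Sum.inr (σ i)) := by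
      rw [permPartition_rel]; simp
    have h2 : (permPartition τ) (Sum.inr (σ i)) (Sum.inl (τ.symm (σ i))) := by
      rw [permPartition_rel]; simp
    have : τ.symm (σ i) = c i := by simp [hc, Perm.mul_apply, ← Equiv.Perm.inv_def]
    rw [this] at h2
    exact Setoid.trans' _ ((le_sup_left : permPartition σ ≤ _) h1)
      ((le_sup_right : permPartition τ ≤ _) h2)
  have hcyc : cycleSetoid c ≤ Setoid.comap Sum.inl (permPartition σ ⊔ permPartition τ) :=
    cyc_le (fun i => hs i)
  have hlift : ∀ i j : Fin k, c.SameCycle i j →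
      (permPartition σ ⊔ permPartition τ) (Sum.inl i) (Sum.inl j) := by
    intro i j hij
    exact hcyc hij
  have hbridge : ∀ j : Fin k,
      (permPartition σ) (Sum.inl (σ.symm j)) (Sum.inr j) := by
    intro j
    rw [permPartition_rel]; simp
  have h' : c.SameCycle (Sum.elim id ⇑σ.symm x) (Sum.elim id ⇑σ.symm y) := Quotient.exact h
  cases x with
  | inl i => cases y with
    | inl j => exact hlift _ _ h'
    | inr j =>
      exact Setoid.trans' _ (hlift _ _ h')
        ((le_sup_left : permPartition σ ≤ _) (hbridge j))
  | inr i => cases y with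
    | inl j =>
      exact Setoid.trans' _
        (Setoid.symm' _ ((le_sup_left : permPartition σ ≤ _) (hbridge i))) (hlift _ _ h')
    | inr j =>
      refine Setoid.trans' _ (Setoid.trans' _
        (Setoid.symm' _ ((le_sup_left : permPartition σ ≤ _) (hbridge i)))
        (hlift _ _ h')) ((le_sup_left : permPartition σ ≤ _) (hbridge j))

lemma nc_permPartition_sup (σ τ : Perm (Fin k)) :
    nc (permPartition σ ⊔ permPartition τ) = cN (τ⁻¹ * σ) := by
  rw [permPartition_sup, nc]
  have hsurj : Function.Surjective
      (fun x => Quotient.mk (cycleSetoid (τ⁻¹ * σ)) (Sum.elim id ⇑σ.symm x)) := by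
    intro q
    induction q using Quotient.ind with | _ i =>
    exact ⟨Sum.inl i, rfl⟩
  exact Nat.card_congr (Setoid.quotientKerEquivOfSurjective _ hsurj)

lemma nc_permPartition (σ : Perm (Fin k)) : nc (permPartition σ) = k := by
  rw [permPartition, nc]
  have hsurj : Function.Surjective (Sum.elim (id : Fin k → Fin k) ⇑σ.symm) :=
    fun j => ⟨Sum.inl j, rfl⟩
  rw [Nat.card_congr (Setoid.quotientKerEquivOfSurjective _ hsurj)]
  rw [Nat.card_eq_fintype_card, Fintype.card_fin]

lemma pdist_permPartition (σ τ : Perm (Fin k)) :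
    pdist (permPartition σ) (permPartition τ) = (k : ℚ) - (cN (τ⁻¹ * σ) : ℚ) := by
  rw [pdist, nc_permPartition, nc_permPartition, nc_permPartition_sup]
  ring

lemma orbitMap_permPartition (σ : Perm (Fin k)) :
    orbitMap (permPartition σ) = cycleSetoid σ := by
  refine Setoid.ext (fun i j => ?_)
  rw [orbitMap, Setoid.comap_rel, idk_eq, permPartition_sup]
  show Quotient.mk _ _ = Quotient.mk _ _ ↔ _
  simp only [Sum.elim_inl, id]
  constructor
  · intro h
    have := Quotient.exact h
    change (cycleSetoid (1⁻¹ * σ)) i j at this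
    rwa [inv_one, one_mul] at this
  · intro h
    refine Quotient.sound ?_
    change (cycleSetoid (1⁻¹ * σ)) i j
    rwa [inv_one, one_mul]

lemma seg_mem_iff (hk : 0 < k) (σ : Perm (Fin k)) :
    permPartition σ ∈ seg (idk k) (permPartition (finRotate k)) ↔
      cN σ + cN (σ⁻¹ * finRotate k) = k + 1 := by
  have e1 : pdist (idk k) (permPartition σ) = (k : ℚ) - (cN σ : ℚ) := by
    rw [idk_eq, pdist_permPartition, mul_one, cN_inv]
  have e2 : pdist (permPartition σ) (permPartition (finRotate k))
      = (k : ℚ) - (cN (σ⁻¹ * finRotate k) : ℚ) := by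
    rw [pdist_permPartition,
      show (finRotate k)⁻¹ * σ = (σ⁻¹ * finRotate k)⁻¹ by rw [mul_inv_rev, inv_inv], cN_inv]
  have e3 : pdist (idk k) (permPartition (finRotate k)) = (k : ℚ) - 1 := by
    rw [idk_eq, pdist_permPartition, mul_one, cN_inv, cN_finRotate hk]
    norm_num
  constructor
  · intro h
    have h' : pdist (idk k) (permPartition σ)
        + pdist (permPartition σ) (permPartition (finRotate k))
        = pdist (idk k) (permPartition (finRotate k)) := h
    rw [e1, e2, e3] at h'
    have hq : ((cN σ + cN (σ⁻¹ * finRotate k) : ℕ) : ℚ) = ((k + 1 : ℕ) : ℚ) := by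
      push_cast
      linarith
    exact_mod_cast hq
  · intro h
    show pdist (idk k) (permPartition σ)
        + pdist (permPartition σ) (permPartition (finRotate k))
        = pdist (idk k) (permPartition (finRotate k))
    rw [e1, e2, e3]
    have hq : ((cN σ : ℕ) : ℚ) + ((cN (σ⁻¹ * finRotate k) : ℕ) : ℚ) = (k : ℚ) + 1 := by
      exact_mod_cast congrArg (fun n : ℕ => (n : ℚ)) h
    linarith

lemma geoLE_iff (σ τ : Perm (Fin k)) :
    geoLE (idk k) (permPartition σ) (permPartition τ) ↔
      cN σ + cN (σ⁻¹ * τ) = k + cN τ := by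
  have e1 : pdist (idk k) (permPartition σ) = (k : ℚ) - (cN σ : ℚ) := by
    rw [idk_eq, pdist_permPartition, mul_one, cN_inv]
  have e1' : pdist (idk k) (permPartition τ) = (k : ℚ) - (cN τ : ℚ) := by
    rw [idk_eq, pdist_permPartition, mul_one, cN_inv]
  have e2 : pdist (permPartition σ) (permPartition τ)
      = (k : ℚ) - (cN (σ⁻¹ * τ) : ℚ) := by
    rw [pdist_permPartition, show τ⁻¹ * σ = (σ⁻¹ * τ)⁻¹ by rw [mul_inv_rev, inv_inv], cN_inv]
  constructor
  · intro h
    have h' : pdist (idk k) (permPartition σ)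
        + pdist (permPartition σ) (permPartition τ)
        = pdist (idk k) (permPartition τ) := h
    rw [e1, e1', e2] at h'
    have hq : ((cN σ + cN (σ⁻¹ * τ) : ℕ) : ℚ) = ((k + cN τ : ℕ) : ℚ) := by
      push_cast
      linarith
    exact_mod_cast hq
  · intro h
    show pdist (idk k) (permPartition σ)
        + pdist (permPartition σ) (permPartition τ)
        = pdist (idk k) (permPartition τ)
    rw [e1, e1', e2]
    have hq : ((cN σ : ℕ) : ℚ) + ((cN (σ⁻¹ * τ) : ℕ) : ℚ) = (k : ℚ) + (cN τ : ℚ) := by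
      exact_mod_cast congrArg (fun n : ℕ => (n : ℚ)) h
    linarith

end PermLemmas


/-- The poset `([id_k, (1,…,k)] ∩ S_k, ≤)` is order-isomorphic to the
non-crossing partitions of `{1,…,k}` ordered by refinement, via the map sending a
permutation partition to the partition into the orbits of the corresponding bijection. -/
theorem statement9 (k : ℕ) (hk : 0 < k) :
    (∀ σ : Equiv.Perm (Fin k), orbitMap (permPartition σ) = cycleSetoid σ) ∧
    Set.BijOn (orbitMap (k := k))
      (seg (idk k) (permPartition (finRotate k)) ∩ Sk k)
      {π : Setoid (Fin k) | NonCrossing π} ∧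
    ∀ p ∈ seg (idk k) (permPartition (finRotate k)) ∩ Sk k,
      ∀ q ∈ seg (idk k) (permPartition (finRotate k)) ∩ Sk k,
        (geoLE (idk k) p q ↔ orbitMap p ≤ orbitMap q) := by
  have hstruct : ∀ σ : Perm (Fin k), cN σ + cN (σ⁻¹ * finRotate k) = k + 1 →
      NonCrossing (cycleSetoid σ) ∧ σ = σof (cycleSetoid σ) :=
    fun σ h => geodesic_struct hk _ σ rfl h
  have hnE : Nonempty (Fin k) := ⟨⟨0, hk⟩⟩
  refine ⟨orbitMap_permPartition, ⟨?_, ?_, ?_⟩, ?_⟩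
  · -- maps to
    rintro p ⟨hseg, σ, rfl⟩
    rw [Set.mem_setOf_eq, orbitMap_permPartition]
    exact (hstruct σ ((seg_mem_iff hk σ).mp hseg)).1
  · -- injective on
    rintro p ⟨hseg1, σ, rfl⟩ q ⟨hseg2, τ, rfl⟩ he
    rw [orbitMap_permPartition, orbitMap_permPartition] at he
    obtain ⟨_, h1⟩ := hstruct σ ((seg_mem_iff hk σ).mp hseg1)
    obtain ⟨_, h2⟩ := hstruct τ ((seg_mem_iff hk τ).mp hseg2)
    have : σ = τ := by rw [h1, h2, he]
    rw [this]
  · -- surjective on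
    rintro π hπ
    have hch := cN_chain hπ nonCrossing_top le_top
    rw [σof_top_eq_finRotate, nc_top] at hch
    have hσ : cN (σof π) = nc π := cN_σof π
    refine ⟨permPartition (σof π), ⟨?_, ⟨σof π, rfl⟩⟩, ?_⟩
    · rw [seg_mem_iff hk]
      omega
    · rw [orbitMap_permPartition, cyc_σof]
  · -- order isomorphism
    rintro p ⟨hseg1, σ, rfl⟩ q ⟨hseg2, τ, rfl⟩
    obtain ⟨hNC1, h1⟩ := hstruct σ ((seg_mem_iff hk σ).mp hseg1)
    obtain ⟨hNC2, h2⟩ := hstruct τ ((seg_mem_iff hk τ).mp hseg2)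
    rw [geoLE_iff, orbitMap_permPartition, orbitMap_permPartition]
    constructor
    · intro h
      exact cyc_le_of_geo _ σ rfl h
    · intro hle
      have hch := cN_chain hNC1 hNC2 hle
      rw [← h1, ← h2] at hch
      have e1 : nc (cycleSetoid σ) = cN σ := rfl
      have e2 : nc (cycleSetoid τ) = cN τ := rfl
      omega


end PartitionPaper
end
end

section
/- Let k and l be positive integers, p₁ ∈ P_k and p₂ ∈ P_l. For any p' ∈ P_{k+l} with p' ≤ p₁⊗p₂ (geodesic order with base id_{k+l}), there exist p'₁ ∈ P_k with p'₁ ≤ p₁ and p'₂ ∈ P_l with p'₂ ≤ p₂ such that p' = p'₁ ⊗ p'₂. -/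
open Sum
open scoped Classical

noncomputable section

namespace PartitionPaper

variable {X : Type*}

/-!
Let `s` be the partition of the `k + l` columns into the left and the right half, so that
`id_{k+l}` and `p₁ ⊗ p₂` both refine `s`. Semimodularity of the partition lattice shows that
for `a, c ≤ s` the geodesic defect `d(a,x) + d(x,c) - d(a,c)` of any `x` is at least
`nc s - nc (s ⊔ x)`, which is positive unless `x ≤ s`. Hence a point `x` of the geodesic
refines `s`, i.e. it is a disjoint union `x₁ ⊗ x₂` of a left and a right half. For such `x` the
geodesic equation is the sum of the geodesic equations of the two halves, each of which is a
triangle inequality, so both hold with equality.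
-/

section Semimodularity

variable {α : Type*}

lemma nc_antitone [Finite α] : Antitone (nc : Setoid α → ℕ) := fun _ _ h =>
  Nat.card_le_card_of_surjective (Setoid.map_of_le h) (Quotient.ind fun a => ⟨⟦a⟧, rfl⟩)

lemma nc_strictAnti [Finite α] : StrictAnti (nc : Setoid α → ℕ) := by
  intro r s hlt
  refine (nc_antitone hlt.le).lt_of_ne fun hnc => hlt.not_ge fun a b hab => ?_
  have hsurj : Function.Surjective (Setoid.map_of_le hlt.le) :=
    Quotient.ind fun a => ⟨⟦a⟧, rfl⟩
  have hinj := ((Nat.bijective_iff_surjective_and_card _).2 ⟨hsurj, hnc.symm⟩).injective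
  exact Quotient.exact (hinj (Quotient.sound hab : (⟦a⟧ : Quotient s) = ⟦b⟧))

def pairSetoid (u v : α) : Setoid α := Relation.EqvGen.setoid fun a b => a = u ∧ b = v

lemma pairSetoid_rel (u v : α) : pairSetoid u v u v := Relation.EqvGen.rel _ _ ⟨rfl, rfl⟩

lemma pairSetoid_le {s : Setoid α} {u v : α} (h : s u v) : pairSetoid u v ≤ s :=
  Setoid.eqvGen_le fun _ _ ⟨hu, hv⟩ => hu ▸ hv ▸ h

lemma nc_le_nc_sup_pairSetoid_add_one [Finite α] (z : Setoid α) (u v : α) :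
    nc z ≤ nc (z ⊔ pairSetoid u v) + 1 := by
  set g : Quotient z → Quotient z := Function.update id ⟦v⟧ ⟦u⟧
  have hle : z ⊔ pairSetoid u v ≤ Setoid.ker (g ∘ Quotient.mk z) := by
    refine sup_le (fun a b hab => congrArg g (Quotient.sound hab)) (pairSetoid_le ?_)
    show g ⟦u⟧ = g ⟦v⟧
    by_cases huv : (⟦u⟧ : Quotient z) = ⟦v⟧ <;> simp [g, huv]
  have hrange : {(⟦v⟧ : Quotient z)}ᶜ ⊆ Set.range (g ∘ Quotient.mk z) := fun c hc =>
    Quotient.inductionOn c (fun w hw => ⟨w, by simp [g, Function.update_of_ne hw]⟩) hc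
  calc nc z = Set.ncard ({(⟦v⟧ : Quotient z)}ᶜ ∪ {⟦v⟧}) := by
        rw [Set.compl_union_self, Set.ncard_univ]; rfl
    _ ≤ Set.ncard (Set.range (g ∘ Quotient.mk z)) + 1 :=
        (Set.ncard_union_le _ _).trans (by
          rw [Set.ncard_singleton]; gcongr; exact Set.toFinite _)
    _ = nc (Setoid.ker (g ∘ Quotient.mk z)) + 1 := by
        rw [nc, Nat.card_congr (Setoid.quotientKerEquivRange _), Nat.card_coe_set_eq]
    _ ≤ nc (z ⊔ pairSetoid u v) + 1 := by gcongr; exact nc_antitone hle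

variable [Finite α]

instance : Finite (Setoid α) :=
  Finite.of_injective (fun r : Setoid α => ⇑r) fun _ _ h => Setoid.eq_iff_rel_eq.2 h

/-- Semimodularity of the partition lattice, proved by gluing `x` up to `m` two blocks at a
time: each gluing lowers `nc x` by one and `nc (a ⊔ x)` by at most one. -/
lemma nc_sup_add_nc_le_of_le (a : Setoid α) {x m : Setoid α} (hxm : x ≤ m) :
    nc (a ⊔ x) + nc m ≤ nc x + nc (a ⊔ m) := by
  induction x using WellFoundedGT.induction with
  | _ x ih =>
  rcases hxm.eq_or_lt with rfl | hlt
  · omega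
  obtain ⟨u, v, hm, hx⟩ : ∃ u v, m u v ∧ ¬ x u v := by
    by_contra! h
    exact hlt.not_ge fun _ _ => h _ _
  set x' := x ⊔ pairSetoid u v
  have hxx' : x < x' :=
    lt_of_le_not_ge le_sup_left fun h => hx ((le_sup_right.trans h) (pairSetoid_rel u v))
  have hstep := ih x' hxx' (sup_le hxm (pairSetoid_le hm))
  have hglue := nc_strictAnti hxx'
  have hjoin : nc (a ⊔ x) ≤ nc (a ⊔ x') + 1 := by
    simpa only [x', sup_assoc] using nc_le_nc_sup_pairSetoid_add_one (a ⊔ x) u v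
  omega

end Semimodularity

section Geodesic

variable {α : Type*}

lemma geoLE_iff_nc {b x c : Setoid α} :
    geoLE b x c ↔ nc x + nc (b ⊔ c) = nc (b ⊔ x) + nc (x ⊔ c) := by
  rw [geoLE, pdist, pdist, pdist, ← @Nat.cast_inj ℚ]
  push_cast
  constructor <;> intro h <;> linarith

variable [Finite α]

lemma nc_sup_add_nc_sup_add_nc_le {a c s : Setoid α} (x : Setoid α) (has : a ≤ s)
    (hcs : c ≤ s) :
    nc (a ⊔ x) + nc (x ⊔ c) + nc s ≤ nc x + nc (a ⊔ c) + nc (s ⊔ x) := by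
  have hx := nc_sup_add_nc_le_of_le a (le_sup_left : x ≤ x ⊔ c)
  have hc := nc_sup_add_nc_le_of_le (x ⊔ c) (sup_le_sup_right has c)
  have e₁ : x ⊔ c ⊔ (a ⊔ c) = a ⊔ (x ⊔ c) := by ac_rfl
  have e₂ : x ⊔ c ⊔ (s ⊔ c) = s ⊔ x := by
    rw [sup_eq_left.2 hcs, sup_assoc, sup_eq_right.2 hcs, sup_comm]
  rw [e₁, e₂, sup_eq_left.2 hcs] at hc
  omega

lemma nc_sup_add_nc_sup_le (a c x : Setoid α) :
    nc (a ⊔ x) + nc (x ⊔ c) ≤ nc x + nc (a ⊔ c) := by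
  have := nc_sup_add_nc_sup_add_nc_le x (le_top : a ≤ ⊤) (le_top : c ≤ ⊤)
  rw [top_sup_eq] at this
  omega

lemma le_of_geoLE {a x c s : Setoid α} (h : geoLE a x c) (has : a ≤ s) (hcs : c ≤ s) :
    x ≤ s := by
  have hdefect := nc_sup_add_nc_sup_add_nc_le x has hcs
  rw [geoLE_iff_nc] at h
  refine le_sup_right.trans (le_sup_left.eq_or_lt.elim (fun hs => hs.ge) fun hlt => ?_)
  have := nc_strictAnti hlt
  omega

end Geodesic

section Sum

variable {α β : Type*} {p p' : Setoid α} {q q' : Setoid β}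

lemma sumSetoid_apply {x y : α ⊕ β} : sumSetoid p q x y ↔ Sum.LiftRel p q x y := by
  rw [sumSetoid, Setoid.ker_def]
  cases x <;> cases y <;> simp [Quotient.eq]

lemma sumSetoid_le_iff {t : Setoid (α ⊕ β)} :
    sumSetoid p q ≤ t ↔ p ≤ Setoid.comap Sum.inl t ∧ q ≤ Setoid.comap Sum.inr t := by
  refine ⟨fun h => ⟨fun a b hab => h ?_, fun a b hab => h ?_⟩, fun ⟨h₁, h₂⟩ x y hxy => ?_⟩
  · simpa [sumSetoid_apply] using hab
  · simpa [sumSetoid_apply] using hab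
  · rcases sumSetoid_apply.1 hxy with ⟨hab⟩ | ⟨hab⟩
    exacts [h₁ hab, h₂ hab]

lemma sumSetoid_mono (hp : p ≤ p') (hq : q ≤ q') : sumSetoid p q ≤ sumSetoid p' q' :=
  sumSetoid_le_iff.2
    ⟨hp.trans (sumSetoid_le_iff.1 le_rfl).1, hq.trans (sumSetoid_le_iff.1 le_rfl).2⟩

lemma sumSetoid_sup : sumSetoid (p ⊔ p') (q ⊔ q') = sumSetoid p q ⊔ sumSetoid p' q' :=
  le_antisymm
    (sumSetoid_le_iff.2
      ⟨sup_le (sumSetoid_le_iff.1 le_sup_left).1 (sumSetoid_le_iff.1 le_sup_right).1,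
        sup_le (sumSetoid_le_iff.1 le_sup_left).2 (sumSetoid_le_iff.1 le_sup_right).2⟩)
    (sup_le (sumSetoid_mono le_sup_left le_sup_left) (sumSetoid_mono le_sup_right le_sup_right))

lemma sumSetoid_ker {γ δ : Type*} (f : α → γ) (g : β → δ) :
    sumSetoid (Setoid.ker f) (Setoid.ker g) = Setoid.ker (Sum.map f g) := by
  ext x y
  rw [sumSetoid_apply, Setoid.ker_def]
  cases x <;> cases y <;> simp [Setoid.ker_def]

lemma nc_sumSetoid [Finite α] [Finite β] : nc (sumSetoid p q) = nc p + nc q := by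
  have hsurj : Function.Surjective (Sum.map (Quotient.mk p) (Quotient.mk q)) :=
    Sum.map_surjective.2 ⟨Quotient.mk_surjective, Quotient.mk_surjective⟩
  rw [nc, sumSetoid, Nat.card_congr (Setoid.quotientKerEquivOfSurjective _ hsurj), Nat.card_sum]
  rfl

lemma eq_sumSetoid_comap_of_le {t : Setoid (α ⊕ β)} (h : t ≤ sumSetoid ⊤ ⊤) :
    t = sumSetoid (Setoid.comap Sum.inl t) (Setoid.comap Sum.inr t) := by
  ext x y
  rw [sumSetoid_apply]
  refine ⟨fun hxy => ?_, fun hxy => ?_⟩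
  · rcases sumSetoid_apply.1 (h hxy) with ⟨-⟩ | ⟨-⟩
    exacts [Sum.LiftRel.inl hxy, Sum.LiftRel.inr hxy]
  · rcases hxy with ⟨hab⟩ | ⟨hab⟩ <;> exact hab

variable [Finite α] [Finite β]

lemma geoLE_sumSetoid_iff {a c x : Setoid α} {a' c' x' : Setoid β} :
    geoLE (sumSetoid a a') (sumSetoid x x') (sumSetoid c c') ↔
      geoLE a x c ∧ geoLE a' x' c' := by
  simp only [geoLE_iff_nc, ← sumSetoid_sup, nc_sumSetoid]
  have := nc_sup_add_nc_sup_le a c x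
  have := nc_sup_add_nc_sup_le a' c' x'
  omega

lemma exists_eq_sumSetoid_of_geoLE {a c : Setoid α} {a' c' : Setoid β}
    {x : Setoid (α ⊕ β)} (h : geoLE (sumSetoid a a') x (sumSetoid c c')) :
    ∃ y y', geoLE a y c ∧ geoLE a' y' c' ∧ x = sumSetoid y y' := by
  have hx := eq_sumSetoid_comap_of_le <|
    le_of_geoLE h (sumSetoid_mono le_top le_top) (sumSetoid_mono le_top le_top)
  rw [hx, geoLE_sumSetoid_iff] at h
  exact ⟨_, _, h.1, h.2, hx⟩

end Sum

section Transport

variable {α β : Type*}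

def comapOrderIso (e : α ≃ β) : Setoid β ≃o Setoid α :=
  Equiv.toOrderIso
    { toFun := Setoid.comap e
      invFun := Setoid.comap e.symm
      left_inv := fun r => by ext; simp [Setoid.comap_rel]
      right_inv := fun r => by ext; simp [Setoid.comap_rel] }
    (fun _ _ h _ _ hxy => h hxy) (fun _ _ h _ _ hxy => h hxy)

lemma nc_comapOrderIso (e : α ≃ β) (r : Setoid β) : nc (comapOrderIso e r) = nc r :=
  Nat.card_congr (Quotient.congr e fun _ _ => Iff.rfl)

lemma geoLE_comapOrderIso_iff (e : α ≃ β) {b x c : Setoid β} :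
    geoLE (comapOrderIso e b) (comapOrderIso e x) (comapOrderIso e c) ↔ geoLE b x c := by
  simp only [geoLE_iff_nc, ← map_sup, nc_comapOrderIso]

end Transport

def reindexEquiv (k l : ℕ) : Fin (k + l) ⊕ Fin (k + l) ≃ (Fin k ⊕ Fin k) ⊕ (Fin l ⊕ Fin l) :=
  (Equiv.sumCongr finSumFinEquiv.symm finSumFinEquiv.symm).trans (Equiv.sumSumSumComm _ _ _ _)

lemma coe_reindexEquiv (k l : ℕ) : ⇑(reindexEquiv k l) = reindex k l := by
  funext j
  rcases j with j | j <;> rcases h : finSumFinEquiv.symm j with a | a <;>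
    simp [reindexEquiv, reindex, h]

lemma tensor_eq_comapOrderIso {k l : ℕ} (p : Pk k) (q : Pk l) :
    tensor p q = comapOrderIso (reindexEquiv k l) (sumSetoid p q) := by
  rw [tensor, ← coe_reindexEquiv]
  rfl

lemma idk_add (k l : ℕ) : idk (k + l) = tensor (idk k) (idk l) := by
  have hreindex (j : Fin (k + l) ⊕ Fin (k + l)) :
      Sum.map (Sum.elim id id) (Sum.elim id id) (reindex k l j) =
        finSumFinEquiv.symm (Sum.elim id id j) := by
    rcases j with j | j <;> rcases h : finSumFinEquiv.symm j with a | a <;> simp [reindex, h]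
  ext x y
  rw [tensor, Setoid.comap_rel, idk, idk, idk, sumSetoid_ker, Setoid.ker_def, Setoid.ker_def,
    hreindex, hreindex, finSumFinEquiv.symm.injective.eq_iff]

theorem statement13_general (k l : ℕ) (p₁ : Pk k) (p₂ : Pk l)
    (p' : Pk (k + l)) (h : geoLE (idk (k + l)) p' (tensor p₁ p₂)) :
    ∃ (q₁ : Pk k) (q₂ : Pk l),
      geoLE (idk k) q₁ p₁ ∧ geoLE (idk l) q₂ p₂ ∧ p' = tensor q₁ q₂ := by
  set e := comapOrderIso (reindexEquiv k l)
  rw [idk_add, tensor_eq_comapOrderIso, tensor_eq_comapOrderIso, ← e.apply_symm_apply p',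
    geoLE_comapOrderIso_iff] at h
  obtain ⟨q₁, q₂, h₁, h₂, hq⟩ := exists_eq_sumSetoid_of_geoLE h
  exact ⟨q₁, q₂, h₁, h₂, by rw [tensor_eq_comapOrderIso, ← hq, e.apply_symm_apply]⟩

/-- Geodesics factorize through tensor products: if
`p' ≤ p₁ ⊗ p₂` (geodesic order with base `id_{k+l}`), then `p' = p'₁ ⊗ p'₂` with
`p'₁ ≤ p₁` and `p'₂ ≤ p₂`. -/
theorem statement13 (k l : ℕ) (hk : 0 < k) (hl : 0 < l) (p₁ : Pk k) (p₂ : Pk l)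
    (p' : Pk (k + l)) (h : geoLE (idk (k + l)) p' (tensor p₁ p₂)) :
    ∃ (q₁ : Pk k) (q₂ : Pk l),
      geoLE (idk k) q₁ p₁ ∧ geoLE (idk l) q₂ p₂ ∧ p' = tensor q₁ q₂ :=
  statement13_general k l p₁ p₂ p' h

end PartitionPaper
end
end
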